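/- arXiv:2207.11925 — 5 statements merged into one kernel-verified Lean document; each statement's English description precedes it below -/
import Mathlib

section
/- The reflections r₁ and r₄ are not conjugate in W (reflections in long roots and reflections in short roots lie in different conjugacy classes); consequently, the diagram automorphism ι of W is not an inner automorphism. -/
open Matrix

/-- The simple roots `α₁, α₂, α₃, α₄` of the root system of type `F₄` in `ℝ⁴`. -/
noncomputable def F4SimpleRoot : Fin 4 → (Fin 4 → ℝ)
  | 0 => ![0, 1, -1, 0]
  | 1 => ![0, 0, 1, -1]
  | 2 => ![0, 0, 0, 1]
  | 3 => ![1/2, -1/2, -1/2, -1/2]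

/-- An auxiliary `W`-invariant lattice: vectors with half-integer coordinates and
integer coordinate sum. -/
def F4Lat (x : Fin 4 → ℝ) : Prop :=
  (∀ i, ∃ k : ℤ, 2 * x i = (k : ℝ)) ∧ ∃ k : ℤ, x 0 + x 1 + x 2 + x 3 = (k : ℝ)

lemma F4SimpleRoot_normSq :
    (F4SimpleRoot 0 ⬝ᵥ F4SimpleRoot 0 = 2) ∧ (F4SimpleRoot 1 ⬝ᵥ F4SimpleRoot 1 = 2) ∧
    (F4SimpleRoot 2 ⬝ᵥ F4SimpleRoot 2 = 1) ∧ (F4SimpleRoot 3 ⬝ᵥ F4SimpleRoot 3 = 1) := by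
  refine ⟨?_, ?_, ?_, ?_⟩ <;> simp [F4SimpleRoot, dotProduct, Fin.sum_univ_four] <;> norm_num

lemma F4SimpleRoot_normSq_ne (i : Fin 4) : F4SimpleRoot i ⬝ᵥ F4SimpleRoot i ≠ 0 := by
  fin_cases i <;>
    simp [show (0:Fin 4) = 0 from rfl, F4SimpleRoot_normSq.1, F4SimpleRoot_normSq.2.1,
      F4SimpleRoot_normSq.2.2.1, F4SimpleRoot_normSq.2.2.2]

/-- A reflection step preserves the lattice `F4Lat`. -/
lemma F4Lat_reflect (i : Fin 4) (x : Fin 4 → ℝ) (h : F4Lat x) :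
    F4Lat (x - (2 * (x ⬝ᵥ F4SimpleRoot i) / (F4SimpleRoot i ⬝ᵥ F4SimpleRoot i)) •
      F4SimpleRoot i) := by
  obtain ⟨hk, ks, hks⟩ := h
  obtain ⟨k0, hk0⟩ := hk 0
  obtain ⟨k1, hk1⟩ := hk 1
  obtain ⟨k2, hk2⟩ := hk 2
  obtain ⟨k3, hk3⟩ := hk 3
  fin_cases i <;>
    simp only [Fin.isValue, Fin.zero_eta, Fin.mk_one, Fin.reduceFinMk]
  · -- α₁ = (0,1,-1,0); coefficient is x 1 - x 2
    have hc : 2 * (x ⬝ᵥ F4SimpleRoot 0) / (F4SimpleRoot 0 ⬝ᵥ F4SimpleRoot 0) = x 1 - x 2 := by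
      rw [F4SimpleRoot_normSq.1]
      simp [F4SimpleRoot, dotProduct, Fin.sum_univ_four]; ring
    rw [hc]
    constructor
    · intro j
      fin_cases j
      · exact ⟨k0, by simp [F4SimpleRoot]; linarith⟩
      · exact ⟨k2, by simp [F4SimpleRoot]; linarith⟩
      · exact ⟨k1, by simp [F4SimpleRoot]; linarith⟩
      · exact ⟨k3, by simp [F4SimpleRoot]; linarith⟩
    · exact ⟨ks, by simp [F4SimpleRoot]; linarith⟩
  · have hc : 2 * (x ⬝ᵥ F4SimpleRoot 1) / (F4SimpleRoot 1 ⬝ᵥ F4SimpleRoot 1) = x 2 - x 3 := by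
      rw [F4SimpleRoot_normSq.2.1]
      simp [F4SimpleRoot, dotProduct, Fin.sum_univ_four]; ring
    rw [hc]
    constructor
    · intro j
      fin_cases j
      · exact ⟨k0, by simp [F4SimpleRoot]; linarith⟩
      · exact ⟨k1, by simp [F4SimpleRoot]; linarith⟩
      · exact ⟨k3, by simp [F4SimpleRoot]; linarith⟩
      · exact ⟨k2, by simp [F4SimpleRoot]; linarith⟩
    · exact ⟨ks, by simp [F4SimpleRoot]; linarith⟩
  · have hc : 2 * (x ⬝ᵥ F4SimpleRoot 2) / (F4SimpleRoot 2 ⬝ᵥ F4SimpleRoot 2) = 2 * x 3 := by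
      rw [F4SimpleRoot_normSq.2.2.1]
      simp [F4SimpleRoot, dotProduct, Fin.sum_univ_four]
    rw [hc]
    constructor
    · intro j
      fin_cases j
      · exact ⟨k0, by simp [F4SimpleRoot]; linarith⟩
      · exact ⟨k1, by simp [F4SimpleRoot]; linarith⟩
      · exact ⟨k2, by simp [F4SimpleRoot]; linarith⟩
      · exact ⟨-k3, by push_cast; simp [F4SimpleRoot]; linarith⟩
    · exact ⟨ks - k3, by push_cast; simp [F4SimpleRoot]; linarith⟩
  · -- α₄; coefficient is t = x 0 - x 1 - x 2 - x 3, and t = ks - k1 - k2 - k3 ∈ ℤ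
    have hc : 2 * (x ⬝ᵥ F4SimpleRoot 3) / (F4SimpleRoot 3 ⬝ᵥ F4SimpleRoot 3)
        = x 0 - x 1 - x 2 - x 3 := by
      rw [F4SimpleRoot_normSq.2.2.2]
      simp [F4SimpleRoot, dotProduct, Fin.sum_univ_four]; ring
    rw [hc]
    have ht : x 0 - x 1 - x 2 - x 3 = ((ks - k1 - k2 - k3 : ℤ) : ℝ) := by
      push_cast; linarith
    constructor
    · intro j
      fin_cases j
      · exact ⟨k0 - (ks - k1 - k2 - k3), by push_cast; simp [F4SimpleRoot]; linarith⟩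
      · exact ⟨k1 + (ks - k1 - k2 - k3), by push_cast; simp [F4SimpleRoot]; linarith⟩
      · exact ⟨k2 + (ks - k1 - k2 - k3), by push_cast; simp [F4SimpleRoot]; linarith⟩
      · exact ⟨k3 + (ks - k1 - k2 - k3), by push_cast; simp [F4SimpleRoot]; linarith⟩
    · exact ⟨ks + (ks - k1 - k2 - k3), by push_cast; simp [F4SimpleRoot]; linarith⟩

/-- A reflection step preserves the squared norm. -/
lemma F4_reflect_norm (i : Fin 4) (x : Fin 4 → ℝ) :
    (x - (2 * (x ⬝ᵥ F4SimpleRoot i) / (F4SimpleRoot i ⬝ᵥ F4SimpleRoot i)) • F4SimpleRoot i) ⬝ᵥ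
      (x - (2 * (x ⬝ᵥ F4SimpleRoot i) / (F4SimpleRoot i ⬝ᵥ F4SimpleRoot i)) • F4SimpleRoot i)
      = x ⬝ᵥ x := by
  have hd := F4SimpleRoot_normSq_ne i
  set α := F4SimpleRoot i
  have hcomm : α ⬝ᵥ x = x ⬝ᵥ α := dotProduct_comm α x
  rw [sub_dotProduct, dotProduct_sub, dotProduct_sub, smul_dotProduct, dotProduct_smul,
    smul_dotProduct, dotProduct_smul, hcomm]
  field_simp
  ring_nf
  field_simp
  ring

/-- A reflection applied twice is the identity. -/
lemma F4_reflect_invol (i : Fin 4) (x : Fin 4 → ℝ) :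
    ((x - (2 * (x ⬝ᵥ F4SimpleRoot i) / (F4SimpleRoot i ⬝ᵥ F4SimpleRoot i)) • F4SimpleRoot i)
      - (2 * ((x - (2 * (x ⬝ᵥ F4SimpleRoot i) / (F4SimpleRoot i ⬝ᵥ F4SimpleRoot i)) •
          F4SimpleRoot i) ⬝ᵥ F4SimpleRoot i) / (F4SimpleRoot i ⬝ᵥ F4SimpleRoot i)) •
        F4SimpleRoot i) = x := by
  have hd := F4SimpleRoot_normSq_ne i
  set α := F4SimpleRoot i
  rw [sub_dotProduct, smul_dotProduct]
  funext j
  simp only [Pi.sub_apply, Pi.smul_apply, smul_eq_mul]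
  field_simp
  ring

lemma mat_eq_one_of_mulVec {A : Matrix (Fin 4) (Fin 4) ℝ} (h : ∀ x, A.mulVec x = x) : A = 1 := by
  ext i j
  have := congrFun (h (Pi.single j 1)) i
  simpa [Matrix.mulVec_single, Matrix.one_apply, Pi.single_apply] using this

/-- In the Weyl group `W` of type `F₄`, the reflection `r₁` (in a long root) and the
reflection `r₄` (in a short root) are not conjugate; consequently, the diagram
automorphism `ι` (with `ι(r₁) = r₄`, `ι(r₂) = r₃`, `ι(r₃) = r₂`, `ι(r₄) = r₁`) is not
an inner automorphism of `W`. -/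
theorem f4_weyl_group_long_short_not_conjugate
    (r : Fin 4 → GL (Fin 4) ℝ)
    (hr : ∀ i, ∀ x : Fin 4 → ℝ,
      (r i : Matrix (Fin 4) (Fin 4) ℝ).mulVec x =
        x - (2 * (x ⬝ᵥ F4SimpleRoot i) / (F4SimpleRoot i ⬝ᵥ F4SimpleRoot i)) • F4SimpleRoot i)
    (W : Subgroup (GL (Fin 4) ℝ))
    (hW : W = Subgroup.closure (Set.range r))
    (hmem : ∀ i, r i ∈ W)
    (ι : MulAut W)
    (hι : ι ⟨r 0, hmem 0⟩ = ⟨r 3, hmem 3⟩ ∧ ι ⟨r 1, hmem 1⟩ = ⟨r 2, hmem 2⟩ ∧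
      ι ⟨r 2, hmem 2⟩ = ⟨r 1, hmem 1⟩ ∧ ι ⟨r 3, hmem 3⟩ = ⟨r 0, hmem 0⟩) :
    (¬ ∃ w ∈ W, w * r 0 * w⁻¹ = r 3) ∧
    (¬ ∃ g : W, ∀ x : W, ι x = g * x * g⁻¹) := by
  -- each generator is an involution
  have hinv : ∀ i, (r i)⁻¹ = r i := by
    intro i
    have hsq : r i * r i = 1 := by
      apply Units.ext
      show ((r i : Matrix (Fin 4) (Fin 4) ℝ) * (r i : Matrix (Fin 4) (Fin 4) ℝ)) = 1
      apply mat_eq_one_of_mulVec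
      intro x
      rw [← Matrix.mulVec_mulVec, hr, hr]
      exact F4_reflect_invol i x
    exact inv_eq_of_mul_eq_one_left hsq
  -- key invariants, proved by closure induction
  have key : ∀ g ∈ W,
      ((∀ x, F4Lat x → F4Lat ((g : Matrix (Fin 4) (Fin 4) ℝ).mulVec x)) ∧
        (∀ x, (g : Matrix (Fin 4) (Fin 4) ℝ).mulVec x ⬝ᵥ
          (g : Matrix (Fin 4) (Fin 4) ℝ).mulVec x = x ⬝ᵥ x)) ∧
      ((∀ x, F4Lat x → F4Lat ((↑(g⁻¹) : Matrix (Fin 4) (Fin 4) ℝ).mulVec x)) ∧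
        (∀ x, (↑(g⁻¹) : Matrix (Fin 4) (Fin 4) ℝ).mulVec x ⬝ᵥ
          (↑(g⁻¹) : Matrix (Fin 4) (Fin 4) ℝ).mulVec x = x ⬝ᵥ x)) := by
    intro g hg
    rw [hW] at hg
    induction hg using Subgroup.closure_induction with
    | mem x hx =>
      obtain ⟨i, rfl⟩ := hx
      have fwd : (∀ x, F4Lat x → F4Lat ((r i : Matrix (Fin 4) (Fin 4) ℝ).mulVec x)) ∧
          (∀ x, (r i : Matrix (Fin 4) (Fin 4) ℝ).mulVec x ⬝ᵥ
            (r i : Matrix (Fin 4) (Fin 4) ℝ).mulVec x = x ⬝ᵥ x) := by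
        constructor
        · intro x hx; rw [hr]; exact F4Lat_reflect i x hx
        · intro x; rw [hr]; exact F4_reflect_norm i x
      exact ⟨fwd, by rw [hinv i]; exact fwd⟩
    | one =>
      constructor <;> constructor <;> intro x <;>
        simp [Matrix.one_mulVec, Units.val_one]
    | mul a b ha hb iha ihb =>
      have hab : ∀ x, ((a * b : GL (Fin 4) ℝ) : Matrix (Fin 4) (Fin 4) ℝ).mulVec x =
          (a : Matrix (Fin 4) (Fin 4) ℝ).mulVec ((b : Matrix (Fin 4) (Fin 4) ℝ).mulVec x) := by
        intro x; rw [Matrix.mulVec_mulVec]; rfl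
      have hab' : ∀ x, ((↑((a * b)⁻¹) : Matrix (Fin 4) (Fin 4) ℝ)).mulVec x =
          (↑(b⁻¹) : Matrix (Fin 4) (Fin 4) ℝ).mulVec
            ((↑(a⁻¹) : Matrix (Fin 4) (Fin 4) ℝ).mulVec x) := by
        intro x
        have hm : (a * b)⁻¹ = b⁻¹ * a⁻¹ := mul_inv_rev a b
        rw [Matrix.mulVec_mulVec, hm]; rfl
      refine ⟨⟨?_, ?_⟩, ?_, ?_⟩
      · intro x hx; rw [hab]; exact iha.1.1 _ (ihb.1.1 _ hx)
      · intro x; rw [hab, iha.1.2, ihb.1.2]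
      · intro x hx; rw [hab']; exact ihb.2.1 _ (iha.2.1 _ hx)
      · intro x; rw [hab', ihb.2.2, iha.2.2]
    | inv a ha iha =>
      refine ⟨iha.2, ?_⟩
      rw [inv_inv]
      exact iha.1
  -- Part 1: r 0 and r 3 are not conjugate in W
  have part1 : ¬ ∃ w ∈ W, w * r 0 * w⁻¹ = r 3 := by
    rintro ⟨w, hwW, hconj⟩
    set v : Fin 4 → ℝ := (w : Matrix (Fin 4) (Fin 4) ℝ).mulVec (F4SimpleRoot 0) with hv
    -- α1 is in the lattice and has norm² = 2
    have hα1lat : F4Lat (F4SimpleRoot 0) := by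
      refine ⟨fun i => ?_, ⟨0, ?_⟩⟩
      · fin_cases i
        exacts [⟨0, by norm_num [F4SimpleRoot]⟩, ⟨2, by norm_num [F4SimpleRoot]⟩,
          ⟨-2, by norm_num [F4SimpleRoot]⟩, ⟨0, by norm_num [F4SimpleRoot]⟩]
      · simp [F4SimpleRoot] <;> norm_num
    have hvlat : F4Lat v := (key w hwW).1.1 _ hα1lat
    have hvnorm : v ⬝ᵥ v = 2 := by
      rw [hv, (key w hwW).1.2, F4SimpleRoot_normSq.1]
    -- r 0 sends α1 to -α1
    have hrα1 : (r 0 : Matrix (Fin 4) (Fin 4) ℝ).mulVec (F4SimpleRoot 0) = -(F4SimpleRoot 0) := by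
      rw [hr, F4SimpleRoot_normSq.1]
      funext j
      simp only [Pi.sub_apply, Pi.smul_apply, Pi.neg_apply, smul_eq_mul]
      ring
    -- hence r 3 sends v to -v
    have hv3 : (r 3 : Matrix (Fin 4) (Fin 4) ℝ).mulVec v = -v := by
      have h1 : (r 3 : Matrix (Fin 4) (Fin 4) ℝ).mulVec v =
          ((w * r 0 * w⁻¹ : GL (Fin 4) ℝ) : Matrix (Fin 4) (Fin 4) ℝ).mulVec
            ((w : Matrix (Fin 4) (Fin 4) ℝ).mulVec (F4SimpleRoot 0)) := by rw [hconj, hv]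
      rw [h1, Matrix.mulVec_mulVec]
      have h2 : ((w * r 0 * w⁻¹ : GL (Fin 4) ℝ) : Matrix (Fin 4) (Fin 4) ℝ) *
          (w : Matrix (Fin 4) (Fin 4) ℝ) = ((w * r 0 : GL (Fin 4) ℝ) :
            Matrix (Fin 4) (Fin 4) ℝ) := by
        have : (w * r 0 * w⁻¹) * w = w * r 0 := by group
        calc ((w * r 0 * w⁻¹ : GL (Fin 4) ℝ) : Matrix (Fin 4) (Fin 4) ℝ) *
            (w : Matrix (Fin 4) (Fin 4) ℝ)
            = (((w * r 0 * w⁻¹) * w : GL (Fin 4) ℝ) : Matrix (Fin 4) (Fin 4) ℝ) := rfl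
          _ = _ := by rw [this]
      rw [h2]
      have h3 : ((w * r 0 : GL (Fin 4) ℝ) : Matrix (Fin 4) (Fin 4) ℝ) =
          (w : Matrix (Fin 4) (Fin 4) ℝ) * (r 0 : Matrix (Fin 4) (Fin 4) ℝ) := rfl
      rw [h3, ← Matrix.mulVec_mulVec]
      rw [hrα1, Matrix.mulVec_neg, hv]
    -- so v = c • α₄ with c = v ⬝ᵥ α₄
    set c : ℝ := v ⬝ᵥ F4SimpleRoot 3 with hc
    have hveq : ∀ j, v j = c * F4SimpleRoot 3 j := by
      intro j
      have h1 := congrFun hv3 j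
      rw [hr, F4SimpleRoot_normSq.2.2.2] at h1
      simp only [Pi.sub_apply, Pi.smul_apply, Pi.neg_apply, smul_eq_mul] at h1
      rw [← hc] at h1
      linarith [h1]
    -- norm gives c² = 2
    have hc2 : c ^ 2 = 2 := by
      have : v ⬝ᵥ v = c ^ 2 := by
        simp only [dotProduct, Fin.sum_univ_four, hveq]
        have h30 : F4SimpleRoot 3 0 = 1/2 := by simp [F4SimpleRoot]
        have h31 : F4SimpleRoot 3 1 = -(1/2) := by simp [F4SimpleRoot]; norm_num
        have h32 : F4SimpleRoot 3 2 = -(1/2) := by simp [F4SimpleRoot]; norm_num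
        have h33 : F4SimpleRoot 3 3 = -(1/2) := by simp [F4SimpleRoot]; norm_num
        rw [h30, h31, h32, h33]; ring
      rw [← this, hvnorm]
    -- lattice gives c ∈ ℤ (from the coordinate sum)
    obtain ⟨k, hk⟩ := hvlat.2
    have hsum : v 0 + v 1 + v 2 + v 3 = -c := by
      rw [hveq 0, hveq 1, hveq 2, hveq 3]
      have h30 : F4SimpleRoot 3 0 = 1/2 := by simp [F4SimpleRoot]
      have h31 : F4SimpleRoot 3 1 = -(1/2) := by simp [F4SimpleRoot]; norm_num
      have h32 : F4SimpleRoot 3 2 = -(1/2) := by simp [F4SimpleRoot]; norm_num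
      have h33 : F4SimpleRoot 3 3 = -(1/2) := by simp [F4SimpleRoot]; norm_num
      rw [h30, h31, h32, h33]; ring
    have hck : c = ((-k : ℤ) : ℝ) := by push_cast; linarith [hk, hsum]
    have hk2 : ((-k : ℤ) : ℝ) ^ 2 = 2 := by rw [← hck]; exact hc2
    have hk2' : (-k) ^ 2 = 2 := by exact_mod_cast hk2
    have h1 : (-2 : ℤ) ≤ -k := by nlinarith
    have h2 : (-k : ℤ) ≤ 2 := by nlinarith
    set m : ℤ := -k with hm
    interval_cases m <;> omega
  refine ⟨part1, ?_⟩
  rintro ⟨g, hg⟩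
  have h0 := hg ⟨r 0, hmem 0⟩
  rw [hι.1] at h0
  apply part1
  refine ⟨(g : GL (Fin 4) ℝ), g.2, ?_⟩
  have := congrArg (Subtype.val) h0
  simp only [Subgroup.coe_mul, InvMemClass.coe_inv] at this
  rw [← this]
end

section
/- The 2×2 matrices over K defined by Tₐ = T_d = u·I₂, T_τ = [[−1, 1], [0, v]] and T_{τσ} = [[v, 0], [v, −1]] satisfy the defining relations of the generic Iwahori–Hecke algebra of type F₄ with parameters (u, v): T_d² = u·I₂ + (u−1)T_d, Tₐ² = u·I₂ + (u−1)Tₐ, T_τ² = v·I₂ + (v−1)T_τ, T_{τσ}² = v·I₂ + (v−1)T_{τσ}, T_d Tₐ T_d = Tₐ T_d Tₐ, T_τ T_{τσ} T_τ = T_{τσ} T_τ T_{τσ}, Tₐ T_τ Tₐ T_τ = T_τ Tₐ T_τ Tₐ, T_d T_τ = T_τ T_d, T_d T_{τσ} = T_{τσ} T_d, Tₐ T_{τσ} = T_{τσ} Tₐ. Moreover, the only K-subspaces of K² invariant under all four of these matrices are {0} and K², so the resulting two-dimensional representation σ of the generic Hecke algebra is irreducible. -/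
/-!
The quadratic relations hold because `T_τ` and `T_{τσ}` both have trace `v - 1` and
determinant `-v`, i.e. eigenvalues `-1` and `v`; every relation involving `Tₐ = T_d = u • 1`
holds because scalar matrices are central; the braid relation of `T_τ, T_{τσ}` is a direct
computation. For irreducibility, `T_τ + 1` and `T_{τσ} + 1` have rank one with images spanned
by `(1, v + 1)` and `(v + 1, v)`. Any nonzero invariant subspace contains the first of these
(using `v ≠ 0` if the given vector has second coordinate zero), hence the second, and these
two span `K²` because their determinant is `-(v² + v + 1) ≠ 0`.
-/

open Matrix

/-- `K = ℚ(u, v)`, the field of rational functions in two commuting indeterminates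
`u, v` over `ℚ`. -/
noncomputable abbrev KF4 : Type := FractionRing (MvPolynomial (Fin 2) ℚ)

/-- The indeterminate `u ∈ K = ℚ(u, v)`. -/
noncomputable def uF4 : KF4 := algebraMap (MvPolynomial (Fin 2) ℚ) KF4 (MvPolynomial.X 0)

/-- The indeterminate `v ∈ K = ℚ(u, v)`. -/
noncomputable def vF4 : KF4 := algebraMap (MvPolynomial (Fin 2) ℚ) KF4 (MvPolynomial.X 1)

section Relations

variable {R : Type*} [CommRing R]

theorem Matrix.sq_fin_two_eq_trace_smul_sub_det_smul (M : Matrix (Fin 2) (Fin 2) R) :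
    M ^ 2 = M.trace • M - M.det • 1 := by
  ext i j
  fin_cases i <;> fin_cases j <;> simp [sq, mul_apply, trace_fin_two, det_fin_two] <;> ring

theorem Matrix.sq_eq_smul_one_add_smul_of_trace_of_det {M : Matrix (Fin 2) (Fin 2) R} {q : R}
    (htr : M.trace = q - 1) (hdet : M.det = -q) : M ^ 2 = q • 1 + (q - 1) • M := by
  rw [M.sq_fin_two_eq_trace_smul_sub_det_smul, htr, hdet]
  module

theorem smul_one_sq_eq_smul_one_add_smul {A : Type*} [Ring A] [Algebra R A] (q : R) :
    (q • 1 : A) ^ 2 = q • 1 + (q - 1) • (q • 1 : A) := by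
  rw [smul_pow, one_pow]
  module

theorem Matrix.of_fin_two_eq_smul_one (a : R) : !![a, 0; 0, a] = a • 1 := by
  ext i j
  fin_cases i <;> fin_cases j <;> simp

theorem tau_mul_tauSigma_mul_tau (v : R) :
    !![-1, 1; 0, v] * !![v, 0; v, -1] * !![-1, 1; 0, v] =
      !![v, 0; v, -1] * !![-1, 1; 0, v] * (!![v, 0; v, -1] : Matrix (Fin 2) (Fin 2) R) := by
  ext i j
  fin_cases i <;> fin_cases j <;> simp [mul_apply, Fin.sum_univ_two]

end Relations

section Irreducible

variable {K : Type*} [Field K]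

theorem Submodule.eq_top_of_mem_of_mem_of_det_ne_zero {p : Submodule K (Fin 2 → K)}
    {x y : Fin 2 → K} (hx : x ∈ p) (hy : y ∈ p) (hdet : (Matrix.of ![x, y]).det ≠ 0) :
    p = ⊤ := by
  have hspan := (linearIndependent_rows_of_det_ne_zero hdet).span_eq_top_of_card_eq_finrank
    (by simp)
  rw [eq_top_iff, ← hspan, Submodule.span_le, Set.range_subset_iff]
  intro i
  fin_cases i <;> simpa

variable {v : K}

theorem tau_mulVec_add_self (x : Fin 2 → K) :
    !![-1, 1; 0, v] *ᵥ x + x = x 1 • ![1, v + 1] := by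
  ext i
  fin_cases i <;> simp [dotProduct, Fin.sum_univ_two]
  ring

theorem tauSigma_mulVec_add_self (x : Fin 2 → K) :
    !![v, 0; v, -1] *ᵥ x + x = x 0 • ![v + 1, v] := by
  ext i
  fin_cases i <;> simp [dotProduct, Fin.sum_univ_two] <;> ring

theorem eq_top_of_tau_tauSigma_invariant_of_mem (hv : v ^ 2 + v + 1 ≠ 0)
    {p : Submodule K (Fin 2 → K)}
    (hA : ∀ x ∈ p, !![-1, 1; 0, v] *ᵥ x ∈ p) (hB : ∀ x ∈ p, !![v, 0; v, -1] *ᵥ x ∈ p)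
    {x : Fin 2 → K} (hx : x ∈ p) (hx1 : x 1 ≠ 0) : p = ⊤ := by
  have h1 : ![1, v + 1] ∈ p := by
    have := p.smul_mem (x 1)⁻¹ (p.add_mem (hA x hx) hx)
    rwa [tau_mulVec_add_self, inv_smul_smul₀ hx1] at this
  have h2 : ![v + 1, v] ∈ p := by
    have := p.add_mem (hB _ h1) h1
    rwa [tauSigma_mulVec_add_self, Matrix.cons_val_zero, one_smul] at this
  refine Submodule.eq_top_of_mem_of_mem_of_det_ne_zero h1 h2 fun h ↦ hv ?_
  rw [det_fin_two_of] at h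
  linear_combination -h

theorem tau_tauSigma_invariant_eq_bot_or_eq_top (hv₀ : v ≠ 0) (hv : v ^ 2 + v + 1 ≠ 0)
    (p : Submodule K (Fin 2 → K))
    (hA : ∀ x ∈ p, !![-1, 1; 0, v] *ᵥ x ∈ p) (hB : ∀ x ∈ p, !![v, 0; v, -1] *ᵥ x ∈ p) :
    p = ⊥ ∨ p = ⊤ := by
  refine or_iff_not_imp_left.2 fun hp ↦ ?_
  obtain ⟨x, hx, hx0⟩ := Submodule.exists_mem_ne_zero_of_ne_bot hp
  by_cases hx1 : x 1 = 0
  · have hx0' : x 0 ≠ 0 := fun h ↦ hx0 (by ext i; fin_cases i <;> assumption)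
    refine eq_top_of_tau_tauSigma_invariant_of_mem hv hA hB (hB x hx) ?_
    simpa [dotProduct, hx1] using ⟨hv₀, hx0'⟩
  · exact eq_top_of_tau_tauSigma_invariant_of_mem hv hA hB hx hx1

end Irreducible

theorem vF4_ne_zero : vF4 ≠ 0 :=
  (IsFractionRing.to_map_eq_zero_iff).not.2 (MvPolynomial.X_ne_zero 1)

theorem vF4_sq_add_vF4_add_one_ne_zero : vF4 ^ 2 + vF4 + 1 ≠ 0 := by
  have hv : vF4 ^ 2 + vF4 + 1 =
      algebraMap (MvPolynomial (Fin 2) ℚ) KF4 (.X 1 ^ 2 + .X 1 + 1) := by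
    simp [vF4]
  rw [hv, ne_eq, IsFractionRing.to_map_eq_zero_iff]
  intro h
  have h3 := congrArg (MvPolynomial.eval fun _ ↦ (1 : ℚ)) h
  norm_num at h3

/-- The `2×2` matrices `T_d = Tₐ = u·I₂`, `T_τ = [[−1, 1], [0, v]]`,
`T_{τσ} = [[v, 0], [v, −1]]` over `K = ℚ(u, v)` satisfy the defining relations of the
generic Iwahori–Hecke algebra of type `F₄` with parameters `(u, v)`, and the only
`K`-subspaces of `K²` invariant under all four matrices are `{0}` and `K²`; hence the
resulting two-dimensional representation `σ` (which specialises to Kondo's character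
`2₁` under `(u,v) ↦ (1,1)`) is irreducible. -/
theorem f4_hecke_algebra_two_dim_rep_sigma :
    ∀ Td Ta Tt Tts : Matrix (Fin 2) (Fin 2) KF4,
      Td = !![uF4, 0; 0, uF4] →
      Ta = !![uF4, 0; 0, uF4] →
      Tt = !![-1, 1; 0, vF4] →
      Tts = !![vF4, 0; vF4, -1] →
      (Td ^ 2 = uF4 • (1 : Matrix (Fin 2) (Fin 2) KF4) + (uF4 - 1) • Td ∧
       Ta ^ 2 = uF4 • (1 : Matrix (Fin 2) (Fin 2) KF4) + (uF4 - 1) • Ta ∧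
       Tt ^ 2 = vF4 • (1 : Matrix (Fin 2) (Fin 2) KF4) + (vF4 - 1) • Tt ∧
       Tts ^ 2 = vF4 • (1 : Matrix (Fin 2) (Fin 2) KF4) + (vF4 - 1) • Tts ∧
       Td * Ta * Td = Ta * Td * Ta ∧
       Tt * Tts * Tt = Tts * Tt * Tts ∧
       Ta * Tt * Ta * Tt = Tt * Ta * Tt * Ta ∧
       Td * Tt = Tt * Td ∧
       Td * Tts = Tts * Td ∧
       Ta * Tts = Tts * Ta) ∧
      (∀ p : Submodule KF4 (Fin 2 → KF4),
        (∀ x ∈ p, Td.mulVec x ∈ p) → (∀ x ∈ p, Ta.mulVec x ∈ p) →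
        (∀ x ∈ p, Tt.mulVec x ∈ p) → (∀ x ∈ p, Tts.mulVec x ∈ p) →
        p = ⊥ ∨ p = ⊤) := by
  rintro Td Ta Tt Tts rfl rfl rfl rfl
  refine ⟨?_, fun p _ _ ↦
    tau_tauSigma_invariant_eq_bot_or_eq_top vF4_ne_zero vF4_sq_add_vF4_add_one_ne_zero p⟩
  have hu := smul_one_sq_eq_smul_one_add_smul (A := Matrix (Fin 2) (Fin 2) KF4) uF4
  have hτ := sq_eq_smul_one_add_smul_of_trace_of_det (M := !![-1, 1; 0, vF4])
    (by simp [trace_fin_two]; ring) (by simp [det_fin_two])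
  have hτσ := sq_eq_smul_one_add_smul_of_trace_of_det (M := !![vF4, 0; vF4, -1])
    (by simp [trace_fin_two]; ring) (by simp [det_fin_two])
  have hcomm (M : Matrix (Fin 2) (Fin 2) KF4) : uF4 • 1 * M = M * uF4 • 1 :=
    ((Commute.one_left M).smul_left uF4).eq
  rw [of_fin_two_eq_smul_one]
  exact ⟨hu, hu, hτ, hτσ, rfl, tau_mul_tauSigma_mul_tau vF4,
    by rw [hcomm, mul_assoc, hcomm, ← mul_assoc], hcomm _, hcomm _, hcomm _⟩
end

section
/- The 2×2 matrices over K defined by T_d = [[u, 0], [u, −1]], Tₐ = [[−1, 1], [0, u]] and T_τ = T_{τσ} = v·I₂ satisfy the defining relations of the generic Iwahori–Hecke algebra of type F₄ with parameters (u, v): T_d² = u·I₂ + (u−1)T_d, Tₐ² = u·I₂ + (u−1)Tₐ, T_τ² = v·I₂ + (v−1)T_τ, T_{τσ}² = v·I₂ + (v−1)T_{τσ}, T_d Tₐ T_d = Tₐ T_d Tₐ, T_τ T_{τσ} T_τ = T_{τσ} T_τ T_{τσ}, Tₐ T_τ Tₐ T_τ = T_τ Tₐ T_τ Tₐ, T_d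 T_τ = T_τ T_d, T_d T_{τσ} = T_{τσ} T_d, Tₐ T_{τσ} = T_{τσ} Tₐ. Moreover, the only K-subspaces of K² invariant under all four of these matrices are {0} and K², so the resulting two-dimensional representation σ' of the generic Hecke algebra is irreducible. -/
open Matrix

/-- If a polynomial does not vanish at `(1,1)`, its image in `K = ℚ(u,v)` is nonzero. -/
lemma f4_alg_ne_zero (q : MvPolynomial (Fin 2) ℚ)
    (h : MvPolynomial.eval (fun _ => (1:ℚ)) q ≠ 0) :
    algebraMap (MvPolynomial (Fin 2) ℚ) KF4 q ≠ 0 := by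
  intro h0
  have hq : q = 0 := IsFractionRing.injective (MvPolynomial (Fin 2) ℚ) KF4 (by simpa using h0)
  simp [hq] at h

lemma f4_u_ne : uF4 ≠ 0 := by
  simpa [uF4] using f4_alg_ne_zero (MvPolynomial.X 0) (by norm_num)

lemma f4_u1_ne : uF4 + 1 ≠ 0 := by
  have := f4_alg_ne_zero (MvPolynomial.X 0 + 1) (by norm_num)
  simpa [uF4, map_add, _root_.map_one] using this

lemma f4_uuu_ne : uF4 ^ 2 + uF4 + 1 ≠ 0 := by
  have := f4_alg_ne_zero (MvPolynomial.X 0 ^ 2 + MvPolynomial.X 0 + 1) (by norm_num)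
  simpa [uF4, map_add, _root_.map_one, map_pow] using this

set_option maxHeartbeats 2000000 in
/-- The `2×2` matrices `T_d = [[u, 0], [u, −1]]`, `Tₐ = [[−1, 1], [0, u]]`,
`T_τ = T_{τσ} = v·I₂` over `K = ℚ(u, v)` satisfy the defining relations of the generic
Iwahori–Hecke algebra of type `F₄` with parameters `(u, v)`, and the only `K`-subspaces
of `K²` invariant under all four matrices are `{0}` and `K²`; hence the resulting
two-dimensional representation `σ'` (which specialises to Kondo's character `2₃` under
`(u,v) ↦ (1,1)`) is irreducible. -/
theorem f4_hecke_algebra_two_dim_rep_sigma' :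
    ∀ Td Ta Tt Tts : Matrix (Fin 2) (Fin 2) KF4,
      Td = !![uF4, 0; uF4, -1] →
      Ta = !![-1, 1; 0, uF4] →
      Tt = !![vF4, 0; 0, vF4] →
      Tts = !![vF4, 0; 0, vF4] →
      (Td ^ 2 = uF4 • (1 : Matrix (Fin 2) (Fin 2) KF4) + (uF4 - 1) • Td ∧
       Ta ^ 2 = uF4 • (1 : Matrix (Fin 2) (Fin 2) KF4) + (uF4 - 1) • Ta ∧
       Tt ^ 2 = vF4 • (1 : Matrix (Fin 2) (Fin 2) KF4) + (vF4 - 1) • Tt ∧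
       Tts ^ 2 = vF4 • (1 : Matrix (Fin 2) (Fin 2) KF4) + (vF4 - 1) • Tts ∧
       Td * Ta * Td = Ta * Td * Ta ∧
       Tt * Tts * Tt = Tts * Tt * Tts ∧
       Ta * Tt * Ta * Tt = Tt * Ta * Tt * Ta ∧
       Td * Tt = Tt * Td ∧
       Td * Tts = Tts * Td ∧
       Ta * Tts = Tts * Ta) ∧
      (∀ p : Submodule KF4 (Fin 2 → KF4),
        (∀ x ∈ p, Td.mulVec x ∈ p) → (∀ x ∈ p, Ta.mulVec x ∈ p) →
        (∀ x ∈ p, Tt.mulVec x ∈ p) → (∀ x ∈ p, Tts.mulVec x ∈ p) →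
        p = ⊥ ∨ p = ⊤) := by
  intro Td Ta Tt Tts hTd hTa hTt hTts
  subst hTd hTa hTt hTts
  constructor
  · refine ⟨?_, ?_, ?_, ?_, ?_, ?_, ?_, ?_, ?_, ?_⟩ <;>
      · simp only [pow_two, Matrix.one_fin_two, Matrix.mul_fin_two, Matrix.smul_of,
          Matrix.smul_cons, Matrix.smul_empty]
        try (ext i j; fin_cases i <;> fin_cases j <;> (simp; try ring))
  · intro p hd ha _ _
    by_cases hp : p = ⊥
    · exact Or.inl hp
    right
    obtain ⟨x, hx, hx0⟩ := Submodule.ne_bot_iff p |>.mp hp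
    -- first get e1 = ![0,1] ∈ p
    have he1 : (![0, 1] : Fin 2 → KF4) ∈ p := by
      by_cases h0 : x 0 = 0
      · have hx1 : x 1 ≠ 0 := by
          intro h1
          apply hx0
          funext i; fin_cases i <;> simp [h0, h1]
        have key : (![0, 1] : Fin 2 → KF4) = (x 1)⁻¹ • x := by
          funext i; fin_cases i <;>
            (simp [h0, Matrix.vecHead, Matrix.vecTail]; try field_simp)
        rw [key]; exact p.smul_mem _ hx
      · -- w = ![u+1, u] ∈ p
        have hw : (![uF4 + 1, uF4] : Fin 2 → KF4) ∈ p := by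
          have key : (![uF4 + 1, uF4] : Fin 2 → KF4)
              = (x 0)⁻¹ • (Matrix.mulVec !![uF4, 0; uF4, -1] x + x) := by
            funext i; fin_cases i <;>
              (simp [Matrix.mulVec, dotProduct, Fin.sum_univ_two, Matrix.vecHead,
                Matrix.vecTail, Function.comp]; try field_simp; try ring)
          rw [key]
          exact p.smul_mem _ (p.add_mem (hd x hx) hx)
        -- z = Ta w + w = ![u, u^2+u] ∈ p
        have hz : (Matrix.mulVec !![-1, 1; 0, uF4] ![uF4 + 1, uF4]
            + ![uF4 + 1, uF4] : Fin 2 → KF4) ∈ p :=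
          p.add_mem (ha _ hw) hw
        have key : (![0, 1] : Fin 2 → KF4)
            = ((uF4 + 1) / (uF4 * (uF4 ^ 2 + uF4 + 1))) •
              ((Matrix.mulVec !![-1, 1; 0, uF4] ![uF4 + 1, uF4] + ![uF4 + 1, uF4])
                - (uF4 / (uF4 + 1)) • ![uF4 + 1, uF4]) := by
          funext i; fin_cases i <;>
            (simp [Matrix.mulVec, dotProduct, Fin.sum_univ_two, Matrix.vecHead,
              Matrix.vecTail, Function.comp];
              try field_simp [f4_u_ne, f4_u1_ne, f4_uuu_ne]; (try (rw [eq_div_iff (by rw [show uF4 * (uF4 + 1) + 1 = uF4 ^ 2 + uF4 + 1 by ring]; exact f4_uuu_ne)]; ring)); (try ring); (try simp))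
        rw [key]
        exact p.smul_mem _ (p.sub_mem hz (p.smul_mem _ hw))
    -- then e0 = ![1,0] ∈ p
    have he0 : (![1, 0] : Fin 2 → KF4) ∈ p := by
      have key : (![1, 0] : Fin 2 → KF4)
          = Matrix.mulVec !![-1, 1; 0, uF4] ![0, 1] - uF4 • ![0, 1] := by
        funext i; fin_cases i <;>
          (simp [Matrix.mulVec, dotProduct, Fin.sum_univ_two, Matrix.vecHead,
            Matrix.vecTail, Function.comp]; try ring)
      rw [key]
      exact p.sub_mem (ha _ he1) (p.smul_mem _ he1)
    refine Submodule.eq_top_iff'.mpr fun y => ?_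
    have hy : y = y 0 • ![1, 0] + y 1 • ![0, 1] := by
      funext i; fin_cases i <;> simp
    rw [hy]
    exact p.add_mem (p.smul_mem _ he0) (p.smul_mem _ he1)
end

section
/- The eight-dimensional representation of W on ℂ⁴ ⊗ ℂ² given by w ↦ w ⊗ ρ(w), i.e. the tensor product of the natural four-dimensional representation with ρ, is irreducible. (Its character is Kondo's 8₁ = 4₂ ⊗ 2₁.) -/
open Matrix Kronecker

namespace F4Aux

def Rz : Fin 4 → Matrix (Fin 4) (Fin 4) ℤ :=
  ![!![2, 0, 0, 0; 0, 0, 2, 0; 0, 2, 0, 0; 0, 0, 0, 2],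
    !![2, 0, 0, 0; 0, 2, 0, 0; 0, 0, 0, 2; 0, 0, 2, 0],
    !![2, 0, 0, 0; 0, 2, 0, 0; 0, 0, 2, 0; 0, 0, 0, -2],
    !![1, 1, 1, 1; 1, 1, -1, -1; 1, -1, 1, -1; 1, -1, -1, 1]]

def Pz : Fin 4 → Matrix (Fin 2) (Fin 2) ℤ :=
  ![!![1, 0; 0, 1], !![1, 0; 0, 1], !![-1, 1; 0, 1], !![1, 0; 1, -1]]

def Nz (i : Fin 4) : Matrix (Fin 4 × Fin 2) (Fin 4 × Fin 2) ℤ := Rz i ⊗ₖ Pz i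

def wZ (l : List (Fin 4)) : Matrix (Fin 4 × Fin 2) (Fin 4 × Fin 2) ℤ := (l.map Nz).prod

def fi : Fin 4 × Fin 2 → Fin 8 := fun x => ⟨2 * x.1.1 + x.2.1, by omega⟩

def mk8 (A : Matrix (Fin 8) (Fin 8) ℤ) : Matrix (Fin 4 × Fin 2) (Fin 4 × Fin 2) ℤ :=
  Matrix.of fun a b => A (fi a) (fi b)

def vk8 (v : Fin 8 → ℤ) : Fin 4 × Fin 2 → ℤ := fun a => v (fi a)

def uz : Fin 4 × Fin 2 → ℤ := vk8 ![0, 1, 0, 1, 0, -1, 0, -1]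
def vz : Fin 4 × Fin 2 → ℤ := vk8 ![-1, 2, 0, 0, 0, 0, 1, -2]

def sgz : Fin 16 → ℤ :=
  ![524288, -2048, 128, -2048, -64, 4096, -4096, 64, 32, -128, 2048, -512, -64, 256, -4, 1]

def tw : Fin 16 → List (Fin 4) :=
  ![[],
    [0, 2, 1, 2, 3, 2, 1, 2],
    [0, 2, 1, 0, 3, 2, 1, 0, 2, 1, 3, 2],
    [2, 1, 2, 3, 2, 1, 0, 2],
    [0, 1, 0, 2, 1, 0, 2, 3, 2, 1, 0, 2, 3],
    [0, 1, 2, 1, 0, 2, 3],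
    [0, 1, 3, 2, 1, 2, 3],
    [0, 1, 0, 2, 3, 2, 1, 0, 2, 1, 2, 3, 2],
    [2, 1, 0, 2, 1, 2, 3, 2, 1, 0, 2, 1, 3, 2],
    [0, 1, 2, 1, 0, 2, 1, 3, 2, 1, 0, 2],
    [0, 1, 0, 2, 1, 0, 2, 1],
    [1, 2, 1, 0, 2, 1, 3, 2, 1, 2],
    [0, 2, 1, 3, 2, 1, 0, 2, 1, 3, 2, 1, 0],
    [0, 2, 1, 0, 2, 3, 2, 1, 0, 2, 1],
    [0, 1, 2, 1, 0, 2, 1, 2, 3, 2, 1, 0, 2, 1, 3, 2, 1],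
    [0, 1, 2, 1, 0, 3, 2, 1, 0, 2, 1, 2, 3, 2, 1, 0, 2, 1, 2]]

def rww : Fin 8 → List (Fin 4) :=
  ![[], [1], [2], [3], [1, 0], [1, 2], [2, 1], [3, 2]]

def cww : Fin 8 → List (Fin 4) :=
  ![[], [0], [2], [3], [0, 2], [1, 0], [1, 2], [2, 3]]

def Qz : Matrix (Fin 4 × Fin 2) (Fin 4 × Fin 2) ℤ := Matrix.of fun a b => (vz ᵥ* wZ (rww (fi a))) b
def Cz : Matrix (Fin 4 × Fin 2) (Fin 4 × Fin 2) ℤ := Matrix.of fun a b => (wZ (cww (fi b)) *ᵥ uz) a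

def QiZ : Matrix (Fin 4 × Fin 2) (Fin 4 × Fin 2) ℤ := mk8 !![0, -2, 0, 2, -1, 2, 2, 0; 0, 2, 0, -2, 1, 1, 1, 0; 0, -2, 0, 2, 1, 2, -2, -4; 0, 2, 0, -2, -1, 1, -1, -2; 0, 2, 0, 2, -1, -2, 2, 0; 0, -2, 0, -2, 1, -1, 1, 0; 8, -2, 8, 2, -1, -2, -2, 0; -8, 2, 4, -2, 1, -1, -1, 0]
def CiZ : Matrix (Fin 4 × Fin 2) (Fin 4 × Fin 2) ℤ := mk8 !![0, 0, 0, 0, 4, -4, 4, -4; -2, 2, 0, 0, -2, 2, 0, 0; 2, 0, 0, 0, -2, 0, 0, 0; 2, -2, 2, -2, 2, -2, 2, -2; 0, 0, 0, 0, 1, 0, 1, 0; -1, 1, 0, 0, 0, 0, -1, 1; 1, 0, 0, 0, 0, 0, -1, 0; 1, 0, -1, 0, -1, 0, -1, 0]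

set_option maxRecDepth 1000000 in
set_option maxHeartbeats 4000000 in
theorem fact1 : (∑ t : Fin 16, sgz t • wZ (tw t)) = (2 ^ 20 : ℤ) • vecMulVec uz vz := by decide

set_option maxRecDepth 1000000 in
set_option maxHeartbeats 4000000 in
theorem factQ : QiZ * Qz = (24 : ℤ) • 1 := by decide

set_option maxRecDepth 1000000 in
set_option maxHeartbeats 4000000 in
theorem factC : Cz * CiZ = (8 : ℤ) • 1 := by decide

theorem mapZC_mul (A B : Matrix (Fin 4 × Fin 2) (Fin 4 × Fin 2) ℤ) :
    (A * B).map (fun z : ℤ => (z : ℂ)) =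
      A.map (fun z : ℤ => (z : ℂ)) * B.map (fun z : ℤ => (z : ℂ)) := by
  ext i j
  simp only [Matrix.map_apply, Matrix.mul_apply]
  push_cast
  rfl

theorem mapRC_mul (A B : Matrix (Fin 4) (Fin 4) ℝ) :
    (A * B).map (fun a : ℝ => (a : ℂ)) =
      A.map (fun a : ℝ => (a : ℂ)) * B.map (fun a : ℝ => (a : ℂ)) := by
  ext i j
  simp only [Matrix.map_apply, Matrix.mul_apply]
  push_cast
  rfl

theorem mapQC_mul (A B : Matrix (Fin 2) (Fin 2) ℚ) :
    (A * B).map (fun a : ℚ => (a : ℂ)) =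
      A.map (fun a : ℚ => (a : ℂ)) * B.map (fun a : ℚ => (a : ℂ)) := by
  ext i j
  simp only [Matrix.map_apply, Matrix.mul_apply]
  push_cast
  rfl

theorem map_mulVec_cast (M : Matrix (Fin 4 × Fin 2) (Fin 4 × Fin 2) ℤ) (v : Fin 4 × Fin 2 → ℤ) :
    (M.map (fun z : ℤ => (z : ℂ))) *ᵥ (fun i => ((v i : ℤ) : ℂ)) =
      fun i => (((M *ᵥ v) i : ℤ) : ℂ) := by
  funext i
  simp only [Matrix.mulVec, dotProduct, Matrix.map_apply]
  push_cast
  rfl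

theorem cast_vecMul (v : Fin 4 × Fin 2 → ℤ) (M : Matrix (Fin 4 × Fin 2) (Fin 4 × Fin 2) ℤ) :
    (fun i => ((v i : ℤ) : ℂ)) ᵥ* (M.map (fun z : ℤ => (z : ℂ))) =
      fun j => (((v ᵥ* M) j : ℤ) : ℂ) := by
  funext j
  simp only [Matrix.vecMul, dotProduct, Matrix.map_apply]
  push_cast
  rfl

theorem vecMulVec_mulVec' (u v x : Fin 4 × Fin 2 → ℂ) :
    (Matrix.vecMulVec u v) *ᵥ x = (v ⬝ᵥ x) • u := by
  funext i
  simp only [Matrix.mulVec, Matrix.vecMulVec, Matrix.of_apply, dotProduct,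
    Pi.smul_apply, smul_eq_mul, Finset.sum_mul]
  exact Finset.sum_congr rfl fun j _ => by ring

theorem sum_smul_mulVec {n : ℕ} (a : Fin n → ℂ)
    (A : Fin n → Matrix (Fin 4 × Fin 2) (Fin 4 × Fin 2) ℂ) (x : Fin 4 × Fin 2 → ℂ) :
    (∑ t, a t • A t) *ᵥ x = ∑ t, a t • (A t *ᵥ x) := by
  funext i
  simp only [Matrix.mulVec, dotProduct, Finset.sum_apply, Matrix.sum_apply,
    Matrix.smul_apply, Pi.smul_apply, smul_eq_mul, Finset.sum_mul, Finset.mul_sum]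
  rw [Finset.sum_comm]
  exact Finset.sum_congr rfl fun t _ => Finset.sum_congr rfl fun j _ => by ring

theorem map_sum_smul {n : ℕ} (f : Fin n → ℤ)
    (M : Fin n → Matrix (Fin 4 × Fin 2) (Fin 4 × Fin 2) ℤ) :
    ((∑ t, f t • M t).map (fun z : ℤ => (z : ℂ))) =
      ∑ t, ((f t : ℂ)) • (M t).map (fun z : ℤ => (z : ℂ)) := by
  ext i j
  simp only [Matrix.map_apply, Matrix.sum_apply, Matrix.smul_apply, smul_eq_mul]
  push_cast
  rfl

theorem mulVec_eq_sum_cols (M : Matrix (Fin 4 × Fin 2) (Fin 4 × Fin 2) ℂ)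
    (v : Fin 4 × Fin 2 → ℂ) :
    M *ᵥ v = ∑ j, v j • (fun i => M i j) := by
  funext i
  simp only [Matrix.mulVec, dotProduct, Finset.sum_apply, Pi.smul_apply, smul_eq_mul]
  exact Finset.sum_congr rfl fun j _ => by ring

theorem kron_cast (A : Matrix (Fin 4) (Fin 4) ℤ) (B : Matrix (Fin 2) (Fin 2) ℤ) :
    ((A.map (fun z : ℤ => (z : ℝ) / 2)).map (fun a : ℝ => (a : ℂ))) ⊗ₖ
        (B.map (fun z : ℤ => (z : ℂ))) =
      ((2 : ℂ))⁻¹ • (A ⊗ₖ B).map (fun z : ℤ => (z : ℂ)) := by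
  ext ⟨a, b⟩ ⟨d, e⟩
  simp only [Matrix.kroneckerMap_apply, Matrix.map_apply, Matrix.smul_apply, smul_eq_mul]
  push_cast
  ring

end F4Aux

set_option maxHeartbeats 2000000 in
open F4Aux in
/-- The eight-dimensional complex representation `w ↦ w ⊗ ρ(w)` of the Weyl group `W`
of type `F₄` on `ℂ⁴ ⊗ ℂ²` — the tensor product of the natural four-dimensional
representation with the two-dimensional representation `ρ` (Kondo's `2₁`) — is
irreducible: its only invariant subspaces are `{0}` and the whole space.
(Its character is Kondo's `8₁ = 4₂ ⊗ 2₁`.) -/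
theorem f4_weyl_group_rep_eight_one
    (r : Fin 4 → GL (Fin 4) ℝ)
    (hr : ∀ i, ∀ x : Fin 4 → ℝ,
      (r i : Matrix (Fin 4) (Fin 4) ℝ).mulVec x =
        x - (2 * (x ⬝ᵥ F4SimpleRoot i) / (F4SimpleRoot i ⬝ᵥ F4SimpleRoot i)) • F4SimpleRoot i)
    (W : Subgroup (GL (Fin 4) ℝ))
    (hW : W = Subgroup.closure (Set.range r))
    (hmem : ∀ i, r i ∈ W)
    (ρ : W →* Matrix (Fin 2) (Fin 2) ℚ)
    (hρ : ρ ⟨r 0, hmem 0⟩ = 1 ∧ ρ ⟨r 1, hmem 1⟩ = 1 ∧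
      ρ ⟨r 2, hmem 2⟩ = !![-1, 1; 0, 1] ∧ ρ ⟨r 3, hmem 3⟩ = !![1, 0; 1, -1]) :
    ∀ p : Submodule ℂ (Fin 4 × Fin 2 → ℂ),
      (∀ w : W, ∀ x ∈ p,
        ((((w : GL (Fin 4) ℝ) : Matrix (Fin 4) (Fin 4) ℝ).map (fun a => (a : ℂ))) ⊗ₖ
            ((ρ w).map (fun a => (a : ℂ)))).mulVec x ∈ p) →
      p = ⊥ ∨ p = ⊤ := by
  obtain ⟨hρ0, hρ1, hρ2, hρ3⟩ := hρ
  intro p hp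
  -- the generators as elements of W
  set g : Fin 4 → W := fun i => ⟨r i, hmem i⟩ with hgdef
  -- the matrix of each generator
  have hM : ∀ i, ((r i : GL (Fin 4) ℝ) : Matrix (Fin 4) (Fin 4) ℝ) =
      (Rz i).map (fun z : ℤ => (z : ℝ) / 2) := by
    intro i
    ext j k
    have h := congrFun (hr i (Pi.single k 1)) j
    simp only [Matrix.mulVec_single_one, Matrix.col_apply] at h
    rw [h]
    fin_cases i <;> fin_cases j <;> fin_cases k <;>
      simp [F4SimpleRoot, Rz, single_dotProduct, dotProduct,
        Fin.sum_univ_four, Matrix.map_apply, Pi.single_apply, Matrix.vecHead,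
        Matrix.vecTail, Function.comp] <;> norm_num
  have hP0 : (ρ (g 0)).map (fun a : ℚ => (a : ℂ)) = (Pz 0).map (fun z : ℤ => (z : ℂ)) := by
    rw [show ρ (g 0) = 1 from hρ0]
    ext a b
    fin_cases a <;> fin_cases b <;> simp [Pz, Matrix.one_apply] <;> norm_num
  have hP1 : (ρ (g 1)).map (fun a : ℚ => (a : ℂ)) = (Pz 1).map (fun z : ℤ => (z : ℂ)) := by
    rw [show ρ (g 1) = 1 from hρ1]
    ext a b
    fin_cases a <;> fin_cases b <;> simp [Pz, Matrix.one_apply] <;> norm_num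
  have hP2 : (ρ (g 2)).map (fun a : ℚ => (a : ℂ)) = (Pz 2).map (fun z : ℤ => (z : ℂ)) := by
    rw [show ρ (g 2) = !![-1, 1; 0, 1] from hρ2]
    ext a b
    fin_cases a <;> fin_cases b <;> simp [Pz, Matrix.one_apply] <;> norm_num
  have hP3 : (ρ (g 3)).map (fun a : ℚ => (a : ℂ)) = (Pz 3).map (fun z : ℤ => (z : ℂ)) := by
    rw [show ρ (g 3) = !![1, 0; 1, -1] from hρ3]
    ext a b
    fin_cases a <;> fin_cases b <;> simp [Pz, Matrix.one_apply] <;> norm_num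
  have hP : ∀ i : Fin 4, (ρ (g i)).map (fun a : ℚ => (a : ℂ)) =
      (Pz i).map (fun z : ℤ => (z : ℂ)) := by
    intro i
    fin_cases i
    · exact hP0
    · exact hP1
    · exact hP2
    · exact hP3
  have hNq : ∀ i : Fin 4,
      (((g i : GL (Fin 4) ℝ) : Matrix (Fin 4) (Fin 4) ℝ).map (fun a => (a : ℂ))) ⊗ₖ
          ((ρ (g i)).map (fun a => (a : ℂ))) =
        (2 : ℂ)⁻¹ • (Nz i).map (fun z : ℤ => (z : ℂ)) := by
    intro i
    have : ((g i : GL (Fin 4) ℝ) : Matrix (Fin 4) (Fin 4) ℝ) =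
        ((r i : GL (Fin 4) ℝ) : Matrix (Fin 4) (Fin 4) ℝ) := rfl
    rw [this, hM i, hP i, show Nz i = Rz i ⊗ₖ Pz i from rfl]
    exact kron_cast (Rz i) (Pz i)
  -- the matrix by which a word of generators acts
  have wmat : ∀ l : List (Fin 4),
      ((((l.map g).prod : W) : GL (Fin 4) ℝ) : Matrix (Fin 4) (Fin 4) ℝ).map
          (fun a => (a : ℂ)) ⊗ₖ ((ρ ((l.map g).prod)).map (fun a => (a : ℂ))) =
        ((2 : ℂ) ^ l.length)⁻¹ • (wZ l).map (fun z : ℤ => (z : ℂ)) := by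
    intro l
    induction l with
    | nil =>
      simp only [List.map_nil, List.prod_nil, List.length_nil, pow_zero, inv_one, one_smul]
      rw [show wZ [] = 1 from rfl, map_one ρ]
      rw [OneMemClass.coe_one, Units.val_one]
      rw [Matrix.map_one _ (by norm_num) (by norm_num),
        Matrix.map_one _ (by norm_num) (by norm_num),
        Matrix.map_one _ (by norm_num) (by norm_num)]
      exact Matrix.one_kronecker_one
    | cons i l ih =>
      simp only [List.map_cons, List.prod_cons, List.length_cons]
      rw [show ((g i * (l.map g).prod : W) : GL (Fin 4) ℝ) =
        (g i : GL (Fin 4) ℝ) * ((l.map g).prod : GL (Fin 4) ℝ) from rfl]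
      rw [Units.val_mul, map_mul ρ]
      rw [mapRC_mul, mapQC_mul, Matrix.mul_kronecker_mul]
      rw [hNq i, ih]
      rw [smul_mul_smul_comm]
      rw [show wZ (i :: l) = Nz i * wZ l from rfl, mapZC_mul]
      congr 1
      rw [← mul_inv, pow_succ, mul_comm]
  -- closure of p under the action of words
  have key : ∀ l : List (Fin 4), ∀ x ∈ p,
      ((wZ l).map (fun z : ℤ => (z : ℂ))) *ᵥ x ∈ p := by
    intro l x hx
    have h := hp ((l.map g).prod) x hx
    rw [wmat l] at h
    rw [Matrix.smul_mulVec] at h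
    have h2 := p.smul_mem ((2 : ℂ) ^ l.length) h
    rwa [smul_smul, mul_inv_cancel₀ (pow_ne_zero _ two_ne_zero), one_smul] at h2
  rcases eq_or_ne p ⊥ with hbot | hbot
  · exact Or.inl hbot
  right
  obtain ⟨x, hxp, hx0⟩ := Submodule.exists_mem_ne_zero_of_ne_bot hbot
  -- Qz applied to x is nonzero
  have hQx : (Qz.map (fun z : ℤ => (z : ℂ))) *ᵥ x ≠ 0 := by
    intro h0
    apply hx0
    have h1 : ((QiZ * Qz).map (fun z : ℤ => (z : ℂ))) *ᵥ x = 0 := by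
      rw [mapZC_mul, ← Matrix.mulVec_mulVec, h0, Matrix.mulVec_zero]
    rw [factQ] at h1
    have h2 : (((24 : ℤ) • (1 : Matrix (Fin 4 × Fin 2) (Fin 4 × Fin 2) ℤ)).map
        (fun z : ℤ => (z : ℂ))) = (24 : ℂ) • 1 := by
      ext i j
      simp only [Matrix.map_apply, Matrix.smul_apply, Matrix.one_apply, smul_eq_mul]
      split <;> push_cast <;> ring
    rw [h2, Matrix.smul_mulVec, Matrix.one_mulVec] at h1
    have h24 : (24 : ℂ) ≠ 0 := by norm_num
    rcases smul_eq_zero.mp h1 with h | h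
    · exact absurd h h24
    · exact h
  obtain ⟨k, hk⟩ := Function.ne_iff.mp hQx
  -- the vector y
  set y : Fin 4 × Fin 2 → ℂ := ((wZ (rww (fi k))).map (fun z : ℤ => (z : ℂ))) *ᵥ x with hydef
  have hyp : y ∈ p := key _ x hxp
  -- relate the k-th coordinate to a dot product with y
  set vzC : Fin 4 × Fin 2 → ℂ := fun i => ((vz i : ℤ) : ℂ) with hvzC
  set uzC : Fin 4 × Fin 2 → ℂ := fun i => ((uz i : ℤ) : ℂ) with huzC
  have hQk : ((Qz.map (fun z : ℤ => (z : ℂ))) *ᵥ x) k = vzC ⬝ᵥ y := by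
    rw [hydef, hvzC, dotProduct_mulVec, cast_vecMul]
    rfl
  have hvy : vzC ⬝ᵥ y ≠ 0 := by rw [← hQk]; exact hk
  -- the rank-one element of the group algebra applied to y
  have h1 : (∑ t : Fin 16, ((sgz t : ℂ)) •
      (((wZ (tw t)).map (fun z : ℤ => (z : ℂ))) *ᵥ y)) ∈ p :=
    Submodule.sum_mem _ fun t _ => Submodule.smul_mem _ _ (key _ y hyp)
  have hsum : (∑ t : Fin 16, ((sgz t : ℂ)) • (wZ (tw t)).map (fun z : ℤ => (z : ℂ))) =
      ((2 : ℂ) ^ 20) • Matrix.vecMulVec uzC vzC := by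
    rw [← map_sum_smul, fact1]
    ext i j
    simp only [Matrix.map_apply, Matrix.smul_apply, Matrix.vecMulVec_apply, smul_eq_mul,
      hvzC, huzC]
    push_cast
    ring
  have h2 : (∑ t : Fin 16, ((sgz t : ℂ)) •
      (((wZ (tw t)).map (fun z : ℤ => (z : ℂ))) *ᵥ y)) =
      ((2 : ℂ) ^ 20) • ((vzC ⬝ᵥ y) • uzC) := by
    rw [← sum_smul_mulVec, hsum, Matrix.smul_mulVec, vecMulVec_mulVec']
  rw [h2] at h1
  have hu : uzC ∈ p := by
    have h3 := p.smul_mem (((2 : ℂ) ^ 20)⁻¹ * (vzC ⬝ᵥ y)⁻¹) h1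
    have h20 : ((2 : ℂ) ^ 20) ≠ 0 := pow_ne_zero _ two_ne_zero
    have hsc : (((2 : ℂ) ^ 20)⁻¹ * (vzC ⬝ᵥ y)⁻¹ * (2 : ℂ) ^ 20) * (vzC ⬝ᵥ y) = 1 := by
      rw [show (((2 : ℂ) ^ 20)⁻¹ * (vzC ⬝ᵥ y)⁻¹ * (2 : ℂ) ^ 20) * (vzC ⬝ᵥ y) =
        (((2 : ℂ) ^ 20)⁻¹ * (2 : ℂ) ^ 20) * ((vzC ⬝ᵥ y)⁻¹ * (vzC ⬝ᵥ y)) from by ring,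
        inv_mul_cancel₀ h20, inv_mul_cancel₀ hvy, mul_one]
    rwa [smul_smul, smul_smul, hsc, one_smul] at h3
  -- the columns of Cz are all in p
  have hcol : ∀ j : Fin 4 × Fin 2, (fun i => ((Cz i j : ℤ) : ℂ)) ∈ p := by
    intro j
    have h := key (cww (fi j)) uzC hu
    rw [huzC, map_mulVec_cast] at h
    exact h
  -- conclude p = ⊤
  rw [Submodule.eq_top_iff']
  intro z
  have hz : ((Cz.map (fun z : ℤ => (z : ℂ))) *ᵥ ((CiZ.map (fun z : ℤ => (z : ℂ))) *ᵥ z)) =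
      (8 : ℂ) • z := by
    rw [Matrix.mulVec_mulVec, ← mapZC_mul, factC]
    have h2 : (((8 : ℤ) • (1 : Matrix (Fin 4 × Fin 2) (Fin 4 × Fin 2) ℤ)).map
        (fun z : ℤ => (z : ℂ))) = (8 : ℂ) • 1 := by
      ext i j
      simp only [Matrix.map_apply, Matrix.smul_apply, Matrix.one_apply, smul_eq_mul]
      split <;> push_cast <;> ring
    rw [h2, Matrix.smul_mulVec, Matrix.one_mulVec]
  have hmemz : ((Cz.map (fun z : ℤ => (z : ℂ))) *ᵥ ((CiZ.map (fun z : ℤ => (z : ℂ))) *ᵥ z)) ∈ p := by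
    rw [mulVec_eq_sum_cols]
    exact Submodule.sum_mem _ fun j _ => Submodule.smul_mem _ _ (hcol j)
  rw [hz] at hmemz
  have h3 := p.smul_mem ((8 : ℂ)⁻¹) hmemz
  rwa [smul_smul, inv_mul_cancel₀ (by norm_num : (8:ℂ) ≠ 0), one_smul] at h3
end

section
/- The setwise stabilizer 𝒲 = {w ∈ W : w({α₂, α₃}) = {α₂, α₃}} of the set {α₂, α₃} of simple roots is a subgroup of W of order 8, isomorphic to the dihedral group of order 8 (the Weyl group of type B₂). -/
open Matrix

private def dihedralMap {G : Type*} [Group G] (a b : G) : DihedralGroup 4 → G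
  | DihedralGroup.r i => a ^ i.val
  | DihedralGroup.sr i => b * a ^ i.val

private theorem dihedralMap_mul {G : Type*} [Group G] (a b : G) (ha : a ^ 4 = 1)
    (hb : b * b = 1) (hab' : a * b * a = b) :
    ∀ x y, dihedralMap a b (x * y) = dihedralMap a b x * dihedralMap a b y := by
  have hab : a * b = b * a⁻¹ := by
    conv_rhs => rw [← hab']
    group
  have hpow : ∀ m : ℕ, a ^ (m % 4) = a ^ m := by
    intro m
    conv_rhs => rw [← Nat.div_add_mod m 4]
    rw [pow_add, pow_mul, ha, one_pow, one_mul]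
  have hadd : ∀ i j : ZMod 4, a ^ (i + j).val = a ^ i.val * a ^ j.val := by
    intro i j
    rw [ZMod.val_add, hpow, pow_add]
  have hconj : ∀ m : ℕ, a ^ m * b = b * (a ^ m)⁻¹ := by
    intro m
    induction m with
    | zero => simp
    | succ k ih => rw [pow_succ, mul_assoc, hab, ← mul_assoc, ih]; group
  have hsub : ∀ i j : ZMod 4, (a ^ i.val)⁻¹ * a ^ j.val = a ^ (j - i).val := by
    intro i j
    have h1 : a ^ i.val * a ^ (j - i).val = a ^ j.val := by
      rw [← hadd]; congr 1; ring
    rw [← h1, inv_mul_cancel_left]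
  intro x y
  cases x with
  | r i =>
      cases y with
      | r j =>
          rw [DihedralGroup.r_mul_r]
          exact hadd i j
      | sr j =>
          rw [DihedralGroup.r_mul_sr]
          show b * a ^ (j - i).val = a ^ i.val * (b * a ^ j.val)
          rw [← mul_assoc, hconj, mul_assoc, hsub]
  | sr i =>
      cases y with
      | r j =>
          rw [DihedralGroup.sr_mul_r]
          show b * a ^ (i + j).val = b * a ^ i.val * a ^ j.val
          rw [hadd, mul_assoc]
      | sr j =>
          rw [DihedralGroup.sr_mul_sr]
          show a ^ (j - i).val = (b * a ^ i.val) * (b * a ^ j.val)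
          rw [← mul_assoc, mul_assoc b _ b, hconj, ← mul_assoc, hb, one_mul, hsub]

private lemma matEq4 {M N : Matrix (Fin 4) (Fin 4) ℝ}
    (h0 : M.mulVec ![1,0,0,0] = N.mulVec ![1,0,0,0])
    (h1 : M.mulVec ![0,1,0,0] = N.mulVec ![0,1,0,0])
    (h2 : M.mulVec ![0,0,1,0] = N.mulVec ![0,0,1,0])
    (h3 : M.mulVec ![0,0,0,1] = N.mulVec ![0,0,0,1]) : M = N := by
  ext i j
  fin_cases j
  · simpa [Matrix.mulVec, dotProduct, Fin.sum_univ_four] using congrFun h0 i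
  · simpa [Matrix.mulVec, dotProduct, Fin.sum_univ_four] using congrFun h1 i
  · simpa [Matrix.mulVec, dotProduct, Fin.sum_univ_four] using congrFun h2 i
  · simpa [Matrix.mulVec, dotProduct, Fin.sum_univ_four] using congrFun h3 i

private lemma matEqAll {M N : Matrix (Fin 4) (Fin 4) ℝ}
    (h : ∀ x, M.mulVec x = N.mulVec x) : M = N :=
  matEq4 (h _) (h _) (h _) (h _)

private lemma pythInt : ∀ a b : ℤ, a * a + b * b = 1 →
    (a = 1 ∧ b = 0) ∨ (a = -1 ∧ b = 0) ∨ (a = 0 ∧ b = 1) ∨ (a = 0 ∧ b = -1) := by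
  intro a b h
  have h1 : -1 ≤ a := by nlinarith
  have h2 : a ≤ 1 := by nlinarith
  have h3 : -1 ≤ b := by nlinarith
  have h4 : b ≤ 1 := by nlinarith
  interval_cases a <;> interval_cases b <;> omega

set_option maxHeartbeats 2000000 in
/-- The setwise stabilizer `𝒲 = {w ∈ W : w({α₂, α₃}) = {α₂, α₃}}` of the set `{α₂, α₃}`
of simple roots (the unique subset of type `B₂`) is a subgroup of the Weyl group `W` of
type `F₄` of order `8`, isomorphic to the dihedral group of order `8` (the Weyl group of
type `B₂`). -/
theorem f4_weyl_group_relative_weyl_group_B2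
    (r : Fin 4 → GL (Fin 4) ℝ)
    (hr : ∀ i, ∀ x : Fin 4 → ℝ,
      (r i : Matrix (Fin 4) (Fin 4) ℝ).mulVec x =
        x - (2 * (x ⬝ᵥ F4SimpleRoot i) / (F4SimpleRoot i ⬝ᵥ F4SimpleRoot i)) • F4SimpleRoot i)
    (W : Subgroup (GL (Fin 4) ℝ))
    (hW : W = Subgroup.closure (Set.range r)) :
    ∃ 𝒲 : Subgroup W,
      (∀ w : W, w ∈ 𝒲 ↔
        (fun x => ((w : GL (Fin 4) ℝ) : Matrix (Fin 4) (Fin 4) ℝ).mulVec x) ''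
            ({F4SimpleRoot 1, F4SimpleRoot 2} : Set (Fin 4 → ℝ)) =
          ({F4SimpleRoot 1, F4SimpleRoot 2} : Set (Fin 4 → ℝ))) ∧
      Nat.card 𝒲 = 8 ∧ Nonempty (𝒲 ≃* DihedralGroup 4) := by
  have hfin : ∀ i : Fin 4, i = 0 ∨ i = 1 ∨ i = 2 ∨ i = 3 := by decide
  have hroot1 : F4SimpleRoot 1 = ![0,0,1,-1] := rfl
  have hroot2 : F4SimpleRoot 2 = ![0,0,0,1] := rfl
  -- explicit action of the generators
  have hmv0 : ∀ x : Fin 4 → ℝ,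
      (r 0 : Matrix (Fin 4) (Fin 4) ℝ).mulVec x = ![x 0, x 2, x 1, x 3] := by
    intro x; rw [hr]; funext j
    fin_cases j <;> · simp [F4SimpleRoot, dotProduct, Fin.sum_univ_four]; try ring
  have hmv1 : ∀ x : Fin 4 → ℝ,
      (r 1 : Matrix (Fin 4) (Fin 4) ℝ).mulVec x = ![x 0, x 1, x 3, x 2] := by
    intro x; rw [hr]; funext j
    fin_cases j <;> · simp [F4SimpleRoot, dotProduct, Fin.sum_univ_four]; try ring
  have hmv2 : ∀ x : Fin 4 → ℝ,
      (r 2 : Matrix (Fin 4) (Fin 4) ℝ).mulVec x = ![x 0, x 1, x 2, -x 3] := by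
    intro x; rw [hr]; funext j
    fin_cases j <;> · simp [F4SimpleRoot, dotProduct, Fin.sum_univ_four]; try ring
  have hmv3 : ∀ x : Fin 4 → ℝ,
      (r 3 : Matrix (Fin 4) (Fin 4) ℝ).mulVec x =
        ![(x 0 + x 1 + x 2 + x 3)/2, (x 0 + x 1 - x 2 - x 3)/2,
          (x 0 - x 1 + x 2 - x 3)/2, (x 0 - x 1 - x 2 + x 3)/2] := by
    intro x; rw [hr]; funext j
    fin_cases j <;> · simp [F4SimpleRoot, dotProduct, Fin.sum_univ_four]; try ring
  -- the generators are involutions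
  have hrr : ∀ i, r i * r i = 1 := by
    have key : ∀ i, ∀ x : Fin 4 → ℝ,
        (r i : Matrix (Fin 4) (Fin 4) ℝ).mulVec ((r i : Matrix (Fin 4) (Fin 4) ℝ).mulVec x)
          = x := by
      intro i x
      rcases hfin i with rfl | rfl | rfl | rfl
      · rw [hmv0, hmv0]; funext j; rcases hfin j with rfl|rfl|rfl|rfl <;> norm_num [Matrix.cons_val_three, Matrix.cons_val_two]
      · rw [hmv1, hmv1]; funext j; rcases hfin j with rfl|rfl|rfl|rfl <;> norm_num [Matrix.cons_val_three, Matrix.cons_val_two]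
      · rw [hmv2, hmv2]; funext j; rcases hfin j with rfl|rfl|rfl|rfl <;> norm_num [Matrix.cons_val_three, Matrix.cons_val_two]
      · rw [hmv3, hmv3]; funext j; rcases hfin j with rfl|rfl|rfl|rfl <;> · norm_num [Matrix.cons_val_three, Matrix.cons_val_two]; try ring
    intro i
    apply Units.ext
    apply matEqAll
    intro x
    rw [Units.val_mul, ← Matrix.mulVec_mulVec, key i, Units.val_one, Matrix.one_mulVec]
  have hrinv : ∀ i, (r i)⁻¹ = r i := fun i => inv_eq_of_mul_eq_one_right (hrr i)
  -- orthogonality of all elements of W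
  have hO : ∀ g : GL (Fin 4) ℝ, g ∈ W → ∀ x y : Fin 4 → ℝ,
      ((g : Matrix (Fin 4) (Fin 4) ℝ).mulVec x) ⬝ᵥ ((g : Matrix (Fin 4) (Fin 4) ℝ).mulVec y)
        = x ⬝ᵥ y := by
    intro g hg
    rw [hW] at hg
    induction hg using Subgroup.closure_induction with
    | mem g hgen =>
        obtain ⟨i, rfl⟩ := hgen
        intro x y
        rcases hfin i with rfl | rfl | rfl | rfl
        · rw [hmv0, hmv0]; simp [dotProduct, Fin.sum_univ_four]; try ring
        · rw [hmv1, hmv1]; simp [dotProduct, Fin.sum_univ_four]; try ring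
        · rw [hmv2, hmv2]; simp [dotProduct, Fin.sum_univ_four]; try ring
        · rw [hmv3, hmv3]; simp [dotProduct, Fin.sum_univ_four]; try ring
    | one => intro x y; simp
    | mul a b ha hb pa pb =>
        intro x y
        rw [Units.val_mul, ← Matrix.mulVec_mulVec, ← Matrix.mulVec_mulVec, pa, pb]
    | inv a ha pa =>
        intro x y
        have hcan : ∀ v : Fin 4 → ℝ,
            (a : Matrix (Fin 4) (Fin 4) ℝ).mulVec
              (((a⁻¹ : GL (Fin 4) ℝ) : Matrix (Fin 4) (Fin 4) ℝ).mulVec v) = v := by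
          intro v
          rw [Matrix.mulVec_mulVec, ← Units.val_mul, mul_inv_cancel, Units.val_one,
            Matrix.one_mulVec]
        calc ((a⁻¹ : GL (Fin 4) ℝ) : Matrix (Fin 4) (Fin 4) ℝ).mulVec x ⬝ᵥ
              ((a⁻¹ : GL (Fin 4) ℝ) : Matrix (Fin 4) (Fin 4) ℝ).mulVec y
            = (a : Matrix (Fin 4) (Fin 4) ℝ).mulVec
                (((a⁻¹ : GL (Fin 4) ℝ) : Matrix (Fin 4) (Fin 4) ℝ).mulVec x) ⬝ᵥ
              (a : Matrix (Fin 4) (Fin 4) ℝ).mulVec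
                (((a⁻¹ : GL (Fin 4) ℝ) : Matrix (Fin 4) (Fin 4) ℝ).mulVec y) := (pa _ _).symm
          _ = x ⬝ᵥ y := by rw [hcan, hcan]

  -- the root lattice invariant
  let InL : (Fin 4 → ℝ) → Prop := fun x => ∃ a b c d : ℤ,
    x = ![(a:ℝ), (b:ℝ), (c:ℝ), (d:ℝ)] ∨
    x = ![(a:ℝ) + 1/2, (b:ℝ) + 1/2, (c:ℝ) + 1/2, (d:ℝ) + 1/2]
  have hLgen : ∀ i, ∀ x : Fin 4 → ℝ, InL x →
      InL ((r i : Matrix (Fin 4) (Fin 4) ℝ).mulVec x) := by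
    intro i x hx
    obtain ⟨a, b, c, d, hx | hx⟩ := hx
    · subst hx
      rcases hfin i with rfl | rfl | rfl | rfl
      · refine ⟨a, c, b, d, Or.inl ?_⟩
        rw [hmv0]; funext j
        rcases hfin j with rfl | rfl | rfl | rfl <;> norm_num [Matrix.cons_val_three, Matrix.cons_val_two]
      · refine ⟨a, b, d, c, Or.inl ?_⟩
        rw [hmv1]; funext j
        rcases hfin j with rfl | rfl | rfl | rfl <;> norm_num [Matrix.cons_val_three, Matrix.cons_val_two]
      · refine ⟨a, b, c, -d, Or.inl ?_⟩
        rw [hmv2]; funext j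
        rcases hfin j with rfl | rfl | rfl | rfl <;> push_cast <;> norm_num [Matrix.cons_val_three, Matrix.cons_val_two]
      · rcases Int.even_or_odd (a + b + c + d) with ⟨k, hk⟩ | ⟨k, hk⟩
        · refine ⟨k, k - c - d, k - b - d, k - b - c, Or.inl ?_⟩
          have hk' : (a:ℝ) + b + c + d = k + k := by exact_mod_cast congrArg (Int.cast : ℤ → ℝ) hk
          rw [hmv3]; funext j
          rcases hfin j with rfl | rfl | rfl | rfl <;> push_cast <;> norm_num [Matrix.cons_val_three, Matrix.cons_val_two] <;> linarith
        · refine ⟨k, k - c - d, k - b - d, k - b - c, Or.inr ?_⟩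
          have hk' : (a:ℝ) + b + c + d = 2*k + 1 := by exact_mod_cast congrArg (Int.cast : ℤ → ℝ) hk
          rw [hmv3]; funext j
          rcases hfin j with rfl | rfl | rfl | rfl <;> push_cast <;> norm_num [Matrix.cons_val_three, Matrix.cons_val_two] <;> linarith
    · subst hx
      rcases hfin i with rfl | rfl | rfl | rfl
      · refine ⟨a, c, b, d, Or.inr ?_⟩
        rw [hmv0]; funext j
        rcases hfin j with rfl | rfl | rfl | rfl <;> norm_num [Matrix.cons_val_three, Matrix.cons_val_two]
      · refine ⟨a, b, d, c, Or.inr ?_⟩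
        rw [hmv1]; funext j
        rcases hfin j with rfl | rfl | rfl | rfl <;> norm_num [Matrix.cons_val_three, Matrix.cons_val_two]
      · refine ⟨a, b, c, -d-1, Or.inr ?_⟩
        rw [hmv2]; funext j
        rcases hfin j with rfl | rfl | rfl | rfl <;> push_cast <;> norm_num [Matrix.cons_val_three, Matrix.cons_val_two] <;> try ring
      · rcases Int.even_or_odd (a + b + c + d) with ⟨k, hk⟩ | ⟨k, hk⟩
        · refine ⟨k + 1, k - c - d, k - b - d, k - b - c, Or.inl ?_⟩
          have hk' : (a:ℝ) + b + c + d = k + k := by exact_mod_cast congrArg (Int.cast : ℤ → ℝ) hk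
          rw [hmv3]; funext j
          rcases hfin j with rfl | rfl | rfl | rfl <;> push_cast <;> norm_num [Matrix.cons_val_three, Matrix.cons_val_two] <;> linarith
        · refine ⟨k + 1, k - c - d, k - b - d, k - b - c, Or.inr ?_⟩
          have hk' : (a:ℝ) + b + c + d = 2*k + 1 := by exact_mod_cast congrArg (Int.cast : ℤ → ℝ) hk
          rw [hmv3]; funext j
          rcases hfin j with rfl | rfl | rfl | rfl <;> push_cast <;> norm_num [Matrix.cons_val_three, Matrix.cons_val_two] <;> linarith
  have hL : ∀ g : GL (Fin 4) ℝ, g ∈ W →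
      (∀ x : Fin 4 → ℝ, InL x → InL ((g : Matrix (Fin 4) (Fin 4) ℝ).mulVec x)) ∧
      (∀ x : Fin 4 → ℝ, InL x →
        InL (((g⁻¹ : GL (Fin 4) ℝ) : Matrix (Fin 4) (Fin 4) ℝ).mulVec x)) := by
    intro g hg
    rw [hW] at hg
    induction hg using Subgroup.closure_induction with
    | mem g hgen =>
        obtain ⟨i, rfl⟩ := hgen
        refine ⟨hLgen i, ?_⟩
        rw [hrinv i]
        exact hLgen i
    | one =>
        constructor <;> · intro x hx; simpa using hx
    | mul a b ha hb pa pb =>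
        constructor
        · intro x hx
          rw [Units.val_mul, ← Matrix.mulVec_mulVec]
          exact pa.1 _ (pb.1 _ hx)
        · intro x hx
          rw [_root_.mul_inv_rev, Units.val_mul, ← Matrix.mulVec_mulVec]
          exact pb.2 _ (pa.2 _ hx)
    | inv a ha pa =>
        refine ⟨pa.2, ?_⟩
        intro x hx
        rw [inv_inv]
        exact pa.1 _ hx

  -- generators of W
  have hrmem : ∀ i, r i ∈ W := by
    intro i; rw [hW]; exact Subgroup.subset_closure ⟨i, rfl⟩
  -- the two generators of the relative Weyl group 𝒲
  let gb : GL (Fin 4) ℝ := r 0 * r 1 * r 2 * r 1 * r 0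
  let gc : GL (Fin 4) ℝ := r 3 * r 2 * r 1 * r 2 * r 3
  let ga : GL (Fin 4) ℝ := gc * gb
  have hgbmem : gb ∈ W :=
    mul_mem (mul_mem (mul_mem (mul_mem (hrmem 0) (hrmem 1)) (hrmem 2)) (hrmem 1)) (hrmem 0)
  have hgcmem : gc ∈ W :=
    mul_mem (mul_mem (mul_mem (mul_mem (hrmem 3) (hrmem 2)) (hrmem 1)) (hrmem 2)) (hrmem 3)
  have hgamem : ga ∈ W := mul_mem hgcmem hgbmem
  have hgbmv : ∀ x : Fin 4 → ℝ,
      (gb : Matrix (Fin 4) (Fin 4) ℝ).mulVec x = ![x 0, -x 1, x 2, x 3] := by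
    intro x
    show ((r 0 * r 1 * r 2 * r 1 * r 0 : GL (Fin 4) ℝ) : Matrix (Fin 4) (Fin 4) ℝ).mulVec x = _
    simp only [Units.val_mul, ← Matrix.mulVec_mulVec, hmv0, hmv1, hmv2, hmv3]
    funext j
    rcases hfin j with rfl | rfl | rfl | rfl <;> norm_num [Matrix.cons_val_three, Matrix.cons_val_two]
  have hgcmv : ∀ x : Fin 4 → ℝ,
      (gc : Matrix (Fin 4) (Fin 4) ℝ).mulVec x = ![x 1, x 0, x 2, x 3] := by
    intro x
    show ((r 3 * r 2 * r 1 * r 2 * r 3 : GL (Fin 4) ℝ) : Matrix (Fin 4) (Fin 4) ℝ).mulVec x = _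
    simp only [Units.val_mul, ← Matrix.mulVec_mulVec, hmv0, hmv1, hmv2, hmv3]
    funext j
    rcases hfin j with rfl | rfl | rfl | rfl <;> · norm_num [Matrix.cons_val_three, Matrix.cons_val_two]; try ring
  have hgamv : ∀ x : Fin 4 → ℝ,
      (ga : Matrix (Fin 4) (Fin 4) ℝ).mulVec x = ![-x 1, x 0, x 2, x 3] := by
    intro x
    show ((gc * gb : GL (Fin 4) ℝ) : Matrix (Fin 4) (Fin 4) ℝ).mulVec x = _
    rw [Units.val_mul, ← Matrix.mulVec_mulVec, hgbmv, hgcmv]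
    funext j
    rcases hfin j with rfl | rfl | rfl | rfl <;> norm_num [Matrix.cons_val_three, Matrix.cons_val_two]
  -- the stabilizer condition
  let cond : ↥W → Prop := fun w =>
    (fun x => ((w : GL (Fin 4) ℝ) : Matrix (Fin 4) (Fin 4) ℝ).mulVec x) ''
        ({F4SimpleRoot 1, F4SimpleRoot 2} : Set (Fin 4 → ℝ)) =
      ({F4SimpleRoot 1, F4SimpleRoot 2} : Set (Fin 4 → ℝ))
  have hcond_one : cond 1 := by
    show (fun x => (((1 : ↥W) : GL (Fin 4) ℝ) : Matrix (Fin 4) (Fin 4) ℝ).mulVec x) '' _ = _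
    have h1 : (fun x => (((1 : ↥W) : GL (Fin 4) ℝ) : Matrix (Fin 4) (Fin 4) ℝ).mulVec x)
        = id := by
      funext x
      show ((1 : Matrix (Fin 4) (Fin 4) ℝ)).mulVec x = x
      rw [Matrix.one_mulVec]
    rw [h1, Set.image_id]
  have hcond_mul : ∀ w1 w2 : ↥W, cond w1 → cond w2 → cond (w1 * w2) := by
    intro w1 w2 h1 h2
    show (fun x => (((w1 * w2 : ↥W) : GL (Fin 4) ℝ) : Matrix (Fin 4) (Fin 4) ℝ).mulVec x) '' _ = _
    have hsplit : (fun x => (((w1 * w2 : ↥W) : GL (Fin 4) ℝ) : Matrix (Fin 4) (Fin 4) ℝ).mulVec x)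
        = (fun x => ((w1 : GL (Fin 4) ℝ) : Matrix (Fin 4) (Fin 4) ℝ).mulVec x) ∘
          (fun x => ((w2 : GL (Fin 4) ℝ) : Matrix (Fin 4) (Fin 4) ℝ).mulVec x) := by
      funext x
      show (((w1 : GL (Fin 4) ℝ) * (w2 : GL (Fin 4) ℝ) : GL (Fin 4) ℝ) :
          Matrix (Fin 4) (Fin 4) ℝ).mulVec x = _
      rw [Units.val_mul, ← Matrix.mulVec_mulVec]
      rfl
    rw [hsplit, Set.image_comp, h2, h1]
  have hcond_inv : ∀ w : ↥W, cond w → cond w⁻¹ := by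
    intro w h
    show (fun x => (((w⁻¹ : ↥W) : GL (Fin 4) ℝ) : Matrix (Fin 4) (Fin 4) ℝ).mulVec x) '' _ = _
    have hcanc : ((fun x => (((w⁻¹ : ↥W) : GL (Fin 4) ℝ) : Matrix (Fin 4) (Fin 4) ℝ).mulVec x) ∘
        (fun x => ((w : GL (Fin 4) ℝ) : Matrix (Fin 4) (Fin 4) ℝ).mulVec x)) = id := by
      funext x
      show (((w : GL (Fin 4) ℝ)⁻¹ : GL (Fin 4) ℝ) : Matrix (Fin 4) (Fin 4) ℝ).mulVec
        (((w : GL (Fin 4) ℝ) : Matrix (Fin 4) (Fin 4) ℝ).mulVec x) = x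
      rw [Matrix.mulVec_mulVec, ← Units.val_mul, inv_mul_cancel, Units.val_one,
        Matrix.one_mulVec]
    conv_lhs => rw [← h]
    rw [← Set.image_comp, hcanc, Set.image_id]
  -- the subgroup 𝒲
  let 𝒲 : Subgroup ↥W :=
    { carrier := {w : ↥W | cond w}
      mul_mem' := fun {a b} ha hb => hcond_mul a b ha hb
      one_mem' := hcond_one
      inv_mem' := fun {a} ha => hcond_inv a ha }
  have hgbcond : cond ⟨gb, hgbmem⟩ := by
    show (fun x => (gb : Matrix (Fin 4) (Fin 4) ℝ).mulVec x) '' _ = _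
    rw [Set.image_pair]
    have e1 : (gb : Matrix (Fin 4) (Fin 4) ℝ).mulVec (F4SimpleRoot 1) = F4SimpleRoot 1 := by
      rw [hroot1, hgbmv]; funext j; rcases hfin j with rfl|rfl|rfl|rfl <;> norm_num [Matrix.cons_val_three, Matrix.cons_val_two]
    have e2 : (gb : Matrix (Fin 4) (Fin 4) ℝ).mulVec (F4SimpleRoot 2) = F4SimpleRoot 2 := by
      rw [hroot2, hgbmv]; funext j; rcases hfin j with rfl|rfl|rfl|rfl <;> norm_num [Matrix.cons_val_three, Matrix.cons_val_two]
    rw [e1, e2]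
  have hgacond : cond ⟨ga, hgamem⟩ := by
    show (fun x => (ga : Matrix (Fin 4) (Fin 4) ℝ).mulVec x) '' _ = _
    rw [Set.image_pair]
    have e1 : (ga : Matrix (Fin 4) (Fin 4) ℝ).mulVec (F4SimpleRoot 1) = F4SimpleRoot 1 := by
      rw [hroot1, hgamv]; funext j; rcases hfin j with rfl|rfl|rfl|rfl <;> norm_num [Matrix.cons_val_three, Matrix.cons_val_two]
    have e2 : (ga : Matrix (Fin 4) (Fin 4) ℝ).mulVec (F4SimpleRoot 2) = F4SimpleRoot 2 := by
      rw [hroot2, hgamv]; funext j; rcases hfin j with rfl|rfl|rfl|rfl <;> norm_num [Matrix.cons_val_three, Matrix.cons_val_two]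
    rw [e1, e2]
  let A : ↥𝒲 := ⟨⟨ga, hgamem⟩, hgacond⟩
  let B : ↥𝒲 := ⟨⟨gb, hgbmem⟩, hgbcond⟩
  let matOf : ↥𝒲 → Matrix (Fin 4) (Fin 4) ℝ := fun z =>
    (((z : ↥W) : GL (Fin 4) ℝ) : Matrix (Fin 4) (Fin 4) ℝ)
  have matOf_mul : ∀ z1 z2 : ↥𝒲, matOf (z1 * z2) = matOf z1 * matOf z2 := fun _ _ => rfl
  have matOf_one : matOf 1 = 1 := rfl
  have inj2 : ∀ z1 z2 : ↥𝒲, matOf z1 = matOf z2 → z1 = z2 := by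
    intro z1 z2 h
    exact Subtype.ext (Subtype.ext (Units.ext h))
  have hmatA : ∀ x : Fin 4 → ℝ, (matOf A).mulVec x = ![-x 1, x 0, x 2, x 3] := fun x => hgamv x
  have hmatB : ∀ x : Fin 4 → ℝ, (matOf B).mulVec x = ![x 0, -x 1, x 2, x 3] := fun x => hgbmv x
  -- dihedral relations
  have hb2 : B * B = 1 := by
    apply inj2
    rw [matOf_mul, matOf_one]
    apply matEqAll
    intro x
    simp only [← Matrix.mulVec_mulVec, hmatB, Matrix.one_mulVec]
    funext j; rcases hfin j with rfl|rfl|rfl|rfl <;> norm_num [Matrix.cons_val_three, Matrix.cons_val_two]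
  have ha4 : A ^ 4 = 1 := by
    have h1 : A ^ 4 = A * A * A * A := by rw [pow_succ A 3, pow_succ A 2, pow_succ A 1, pow_one]
    rw [h1]
    apply inj2
    rw [matOf_mul, matOf_mul, matOf_mul, matOf_one]
    apply matEqAll
    intro x
    simp only [← Matrix.mulVec_mulVec, hmatA, Matrix.one_mulVec]
    funext j; rcases hfin j with rfl|rfl|rfl|rfl <;> norm_num [Matrix.cons_val_three, Matrix.cons_val_two]
  have hab : A * B * A = B := by
    apply inj2
    rw [matOf_mul, matOf_mul]
    apply matEqAll
    intro x
    simp only [← Matrix.mulVec_mulVec, hmatA, hmatB]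
    funext j; rcases hfin j with rfl|rfl|rfl|rfl <;> norm_num [Matrix.cons_val_three, Matrix.cons_val_two]
  let F : DihedralGroup 4 →* ↥𝒲 :=
    MonoidHom.mk' (dihedralMap A B) (dihedralMap_mul A B ha4 hb2 hab)

  -- matrices of the eight images of F
  have hF1 : ∀ x : Fin 4 → ℝ, (matOf (F (DihedralGroup.r 0))).mulVec x = x := by
    have e : F (DihedralGroup.r 0) = 1 := by
      show A ^ (0 : ZMod 4).val = 1
      rw [show ((0 : ZMod 4)).val = 0 from rfl, pow_zero]
    intro x
    rw [e, matOf_one, Matrix.one_mulVec]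
  have hFA : ∀ x : Fin 4 → ℝ,
      (matOf (F (DihedralGroup.r 1))).mulVec x = ![-x 1, x 0, x 2, x 3] := by
    have e : F (DihedralGroup.r 1) = A := by
      show A ^ (1 : ZMod 4).val = A
      rw [show ((1 : ZMod 4)).val = 1 from rfl, pow_one]
    intro x
    rw [e, hmatA]
  have hFA2 : ∀ x : Fin 4 → ℝ,
      (matOf (F (DihedralGroup.r 2))).mulVec x = ![-x 0, -x 1, x 2, x 3] := by
    have e : F (DihedralGroup.r 2) = A * A := by
      show A ^ (2 : ZMod 4).val = A * A
      rw [show ((2 : ZMod 4)).val = 2 from rfl, pow_succ A 1, pow_one]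
    intro x
    rw [e, matOf_mul, ← Matrix.mulVec_mulVec, hmatA, hmatA]
    funext j; rcases hfin j with rfl|rfl|rfl|rfl <;> norm_num [Matrix.cons_val_three, Matrix.cons_val_two]
  have hFA3 : ∀ x : Fin 4 → ℝ,
      (matOf (F (DihedralGroup.r 3))).mulVec x = ![x 1, -x 0, x 2, x 3] := by
    have e : F (DihedralGroup.r 3) = A * A * A := by
      show A ^ (3 : ZMod 4).val = A * A * A
      rw [show ((3 : ZMod 4)).val = 3 from rfl, pow_succ A 2, pow_succ A 1, pow_one]
    intro x
    rw [e, matOf_mul, matOf_mul, ← Matrix.mulVec_mulVec, ← Matrix.mulVec_mulVec,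
      hmatA, hmatA, hmatA]
    funext j; rcases hfin j with rfl|rfl|rfl|rfl <;> norm_num [Matrix.cons_val_three, Matrix.cons_val_two]
  have hFB : ∀ x : Fin 4 → ℝ,
      (matOf (F (DihedralGroup.sr 0))).mulVec x = ![x 0, -x 1, x 2, x 3] := by
    have e : F (DihedralGroup.sr 0) = B := by
      show B * A ^ (0 : ZMod 4).val = B
      rw [show ((0 : ZMod 4)).val = 0 from rfl, pow_zero, mul_one]
    intro x
    rw [e, hmatB]
  have hFBA : ∀ x : Fin 4 → ℝ,
      (matOf (F (DihedralGroup.sr 1))).mulVec x = ![-x 1, -x 0, x 2, x 3] := by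
    have e : F (DihedralGroup.sr 1) = B * A := by
      show B * A ^ (1 : ZMod 4).val = B * A
      rw [show ((1 : ZMod 4)).val = 1 from rfl, pow_one]
    intro x
    rw [e, matOf_mul, ← Matrix.mulVec_mulVec, hmatA, hmatB]
    funext j; rcases hfin j with rfl|rfl|rfl|rfl <;> norm_num [Matrix.cons_val_three, Matrix.cons_val_two]
  have hFBA2 : ∀ x : Fin 4 → ℝ,
      (matOf (F (DihedralGroup.sr 2))).mulVec x = ![-x 0, x 1, x 2, x 3] := by
    have e : F (DihedralGroup.sr 2) = B * (A * A) := by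
      show B * A ^ (2 : ZMod 4).val = B * (A * A)
      rw [show ((2 : ZMod 4)).val = 2 from rfl, pow_succ A 1, pow_one]
    intro x
    rw [e, matOf_mul, matOf_mul, ← Matrix.mulVec_mulVec, ← Matrix.mulVec_mulVec,
      hmatA, hmatA, hmatB]
    funext j; rcases hfin j with rfl|rfl|rfl|rfl <;> norm_num [Matrix.cons_val_three, Matrix.cons_val_two]
  have hFBA3 : ∀ x : Fin 4 → ℝ,
      (matOf (F (DihedralGroup.sr 3))).mulVec x = ![x 1, x 0, x 2, x 3] := by
    have e : F (DihedralGroup.sr 3) = B * (A * A * A) := by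
      show B * A ^ (3 : ZMod 4).val = B * (A * A * A)
      rw [show ((3 : ZMod 4)).val = 3 from rfl, pow_succ A 2, pow_succ A 1, pow_one]
    intro x
    rw [e, matOf_mul, matOf_mul, matOf_mul, ← Matrix.mulVec_mulVec, ← Matrix.mulVec_mulVec,
      ← Matrix.mulVec_mulVec, hmatA, hmatA, hmatA, hmatB]
    funext j; rcases hfin j with rfl|rfl|rfl|rfl <;> norm_num [Matrix.cons_val_three, Matrix.cons_val_two]
  -- injectivity
  have hz4 : ∀ i : ZMod 4, i = 0 ∨ i = 1 ∨ i = 2 ∨ i = 3 := by decide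
  have hFinj : Function.Injective F := by
    rw [injective_iff_map_eq_one]
    intro x hx
    have hm := congrArg matOf hx
    rw [matOf_one] at hm
    cases x with
    | r i =>
        rcases hz4 i with rfl | rfl | rfl | rfl
        · exact DihedralGroup.one_def.symm
        · exfalso
          have h := hFA ![(1:ℝ),0,0,0]
          rw [hm, Matrix.one_mulVec] at h
          have h0 := congrFun h 0
          norm_num [Matrix.cons_val_three, Matrix.cons_val_two] at h0
        · exfalso
          have h := hFA2 ![(1:ℝ),0,0,0]
          rw [hm, Matrix.one_mulVec] at h
          have h0 := congrFun h 0
          norm_num [Matrix.cons_val_three, Matrix.cons_val_two] at h0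
        · exfalso
          have h := hFA3 ![(1:ℝ),0,0,0]
          rw [hm, Matrix.one_mulVec] at h
          have h0 := congrFun h 0
          norm_num [Matrix.cons_val_three, Matrix.cons_val_two] at h0
    | sr i =>
        exfalso
        rcases hz4 i with rfl | rfl | rfl | rfl
        · have h := hFB ![(0:ℝ),1,0,0]
          rw [hm, Matrix.one_mulVec] at h
          have h0 := congrFun h 1
          norm_num [Matrix.cons_val_three, Matrix.cons_val_two] at h0
        · have h := hFBA ![(1:ℝ),0,0,0]
          rw [hm, Matrix.one_mulVec] at h
          have h0 := congrFun h 0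
          norm_num [Matrix.cons_val_three, Matrix.cons_val_two] at h0
        · have h := hFBA2 ![(1:ℝ),0,0,0]
          rw [hm, Matrix.one_mulVec] at h
          have h0 := congrFun h 0
          norm_num [Matrix.cons_val_three, Matrix.cons_val_two] at h0
        · have h := hFBA3 ![(1:ℝ),0,0,0]
          rw [hm, Matrix.one_mulVec] at h
          have h0 := congrFun h 0
          norm_num [Matrix.cons_val_three, Matrix.cons_val_two] at h0
  -- surjectivity
  have hInLe0 : InL ![(1:ℝ),0,0,0] := by
    refine ⟨1, 0, 0, 0, Or.inl ?_⟩
    funext j; rcases hfin j with rfl|rfl|rfl|rfl <;> norm_num [Matrix.cons_val_three, Matrix.cons_val_two]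
  have hInLe1 : InL ![(0:ℝ),1,0,0] := by
    refine ⟨0, 1, 0, 0, Or.inl ?_⟩
    funext j; rcases hfin j with rfl|rfl|rfl|rfl <;> norm_num [Matrix.cons_val_three, Matrix.cons_val_two]
  have hFsurj : Function.Surjective F := by
    intro z
    have hOz : ∀ x y : Fin 4 → ℝ, (matOf z).mulVec x ⬝ᵥ (matOf z).mulVec y = x ⬝ᵥ y :=
      hO _ (z : ↥W).2
    have hLz : ∀ x : Fin 4 → ℝ, InL x → InL ((matOf z).mulVec x) := (hL _ (z : ↥W).2).1
    have hz : (fun x => (matOf z).mulVec x) ''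
        ({F4SimpleRoot 1, F4SimpleRoot 2} : Set (Fin 4 → ℝ)) =
        ({F4SimpleRoot 1, F4SimpleRoot 2} : Set (Fin 4 → ℝ)) := z.2
    have ha2 : (matOf z).mulVec (F4SimpleRoot 1) = F4SimpleRoot 1 := by
      have hmem : (matOf z).mulVec (F4SimpleRoot 1) ∈
          ({F4SimpleRoot 1, F4SimpleRoot 2} : Set (Fin 4 → ℝ)) := by
        rw [← hz]
        exact ⟨F4SimpleRoot 1, Set.mem_insert _ _, rfl⟩
      rcases Set.mem_insert_iff.mp hmem with h | h
      · exact h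
      · exfalso
        have hh := Set.mem_singleton_iff.mp h
        have hd := hOz (F4SimpleRoot 1) (F4SimpleRoot 1)
        rw [hh, hroot1, hroot2] at hd
        norm_num [dotProduct, Fin.sum_univ_four, Matrix.cons_val_three, Matrix.cons_val_two] at hd
    have ha3 : (matOf z).mulVec (F4SimpleRoot 2) = F4SimpleRoot 2 := by
      have hmem : (matOf z).mulVec (F4SimpleRoot 2) ∈
          ({F4SimpleRoot 1, F4SimpleRoot 2} : Set (Fin 4 → ℝ)) := by
        rw [← hz]
        exact ⟨F4SimpleRoot 2, Set.mem_insert_of_mem _ rfl, rfl⟩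
      rcases Set.mem_insert_iff.mp hmem with h | h
      · exfalso
        have hd := hOz (F4SimpleRoot 2) (F4SimpleRoot 2)
        rw [h, hroot1, hroot2] at hd
        norm_num [dotProduct, Fin.sum_univ_four, Matrix.cons_val_three, Matrix.cons_val_two] at hd
      · exact Set.mem_singleton_iff.mp h
    have he3 : (matOf z).mulVec ![(0:ℝ),0,0,1] = ![(0:ℝ),0,0,1] := by
      have h := ha3
      rw [hroot2] at h
      exact h
    have he2 : (matOf z).mulVec ![(0:ℝ),0,1,0] = ![(0:ℝ),0,1,0] := by
      have hsum : (![0,0,1,0] : Fin 4 → ℝ) = F4SimpleRoot 1 + F4SimpleRoot 2 := by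
        rw [hroot1, hroot2]; funext j; rcases hfin j with rfl|rfl|rfl|rfl <;> norm_num [Matrix.cons_val_three, Matrix.cons_val_two]
      rw [hsum, Matrix.mulVec_add, ha2, ha3]
    have hucases : (matOf z).mulVec ![(1:ℝ),0,0,0] = ![1,0,0,0] ∨
        (matOf z).mulVec ![(1:ℝ),0,0,0] = ![-1,0,0,0] ∨
        (matOf z).mulVec ![(1:ℝ),0,0,0] = ![0,1,0,0] ∨
        (matOf z).mulVec ![(1:ℝ),0,0,0] = ![0,-1,0,0] := by
      obtain ⟨a, b, c, d, hu | hu⟩ := hLz _ hInLe0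
      · have h2 := hOz ![(1:ℝ),0,0,0] ![(0:ℝ),0,1,0]
        rw [he2, hu] at h2
        norm_num [dotProduct, Fin.sum_univ_four, Matrix.cons_val_three, Matrix.cons_val_two] at h2
        have h3 := hOz ![(1:ℝ),0,0,0] ![(0:ℝ),0,0,1]
        rw [he3, hu] at h3
        norm_num [dotProduct, Fin.sum_univ_four, Matrix.cons_val_three, Matrix.cons_val_two] at h3
        have hc : c = 0 := by exact_mod_cast h2
        have hd : d = 0 := by exact_mod_cast h3
        subst hc; subst hd
        have h4 := hOz ![(1:ℝ),0,0,0] ![(1:ℝ),0,0,0]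
        rw [hu] at h4
        norm_num [dotProduct, Fin.sum_univ_four, Matrix.cons_val_three, Matrix.cons_val_two] at h4
        have key : a * a + b * b = 1 := by
          have hr4 : (a:ℝ) * a + b * b = 1 := by nlinarith [h4]
          exact_mod_cast hr4
        rcases pythInt a b key with ⟨rfl, rfl⟩ | ⟨rfl, rfl⟩ | ⟨rfl, rfl⟩ | ⟨rfl, rfl⟩
        · left; rw [hu]; funext j; rcases hfin j with rfl|rfl|rfl|rfl <;> norm_num [Matrix.cons_val_three, Matrix.cons_val_two]
        · right; left; rw [hu]; funext j; rcases hfin j with rfl|rfl|rfl|rfl <;> norm_num [Matrix.cons_val_three, Matrix.cons_val_two]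
        · right; right; left; rw [hu]; funext j
          rcases hfin j with rfl|rfl|rfl|rfl <;> norm_num [Matrix.cons_val_three, Matrix.cons_val_two]
        · right; right; right; rw [hu]; funext j
          rcases hfin j with rfl|rfl|rfl|rfl <;> norm_num [Matrix.cons_val_three, Matrix.cons_val_two]
      · exfalso
        have h2 := hOz ![(1:ℝ),0,0,0] ![(0:ℝ),0,1,0]
        rw [he2, hu] at h2
        norm_num [dotProduct, Fin.sum_univ_four, Matrix.cons_val_three, Matrix.cons_val_two] at h2
        have h5 : ((2*c+1 : ℤ) : ℝ) = 0 := by push_cast; linarith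
        have h6 : (2*c+1 : ℤ) = 0 := by exact_mod_cast h5
        omega
    have hvcases : (matOf z).mulVec ![(0:ℝ),1,0,0] = ![1,0,0,0] ∨
        (matOf z).mulVec ![(0:ℝ),1,0,0] = ![-1,0,0,0] ∨
        (matOf z).mulVec ![(0:ℝ),1,0,0] = ![0,1,0,0] ∨
        (matOf z).mulVec ![(0:ℝ),1,0,0] = ![0,-1,0,0] := by
      obtain ⟨a, b, c, d, hu | hu⟩ := hLz _ hInLe1
      · have h2 := hOz ![(0:ℝ),1,0,0] ![(0:ℝ),0,1,0]
        rw [he2, hu] at h2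
        norm_num [dotProduct, Fin.sum_univ_four, Matrix.cons_val_three, Matrix.cons_val_two] at h2
        have h3 := hOz ![(0:ℝ),1,0,0] ![(0:ℝ),0,0,1]
        rw [he3, hu] at h3
        norm_num [dotProduct, Fin.sum_univ_four, Matrix.cons_val_three, Matrix.cons_val_two] at h3
        have hc : c = 0 := by exact_mod_cast h2
        have hd : d = 0 := by exact_mod_cast h3
        subst hc; subst hd
        have h4 := hOz ![(0:ℝ),1,0,0] ![(0:ℝ),1,0,0]
        rw [hu] at h4
        norm_num [dotProduct, Fin.sum_univ_four, Matrix.cons_val_three, Matrix.cons_val_two] at h4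
        have key : a * a + b * b = 1 := by
          have hr4 : (a:ℝ) * a + b * b = 1 := by nlinarith [h4]
          exact_mod_cast hr4
        rcases pythInt a b key with ⟨rfl, rfl⟩ | ⟨rfl, rfl⟩ | ⟨rfl, rfl⟩ | ⟨rfl, rfl⟩
        · left; rw [hu]; funext j; rcases hfin j with rfl|rfl|rfl|rfl <;> norm_num [Matrix.cons_val_three, Matrix.cons_val_two]
        · right; left; rw [hu]; funext j; rcases hfin j with rfl|rfl|rfl|rfl <;> norm_num [Matrix.cons_val_three, Matrix.cons_val_two]
        · right; right; left; rw [hu]; funext j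
          rcases hfin j with rfl|rfl|rfl|rfl <;> norm_num [Matrix.cons_val_three, Matrix.cons_val_two]
        · right; right; right; rw [hu]; funext j
          rcases hfin j with rfl|rfl|rfl|rfl <;> norm_num [Matrix.cons_val_three, Matrix.cons_val_two]
      · exfalso
        have h2 := hOz ![(0:ℝ),1,0,0] ![(0:ℝ),0,1,0]
        rw [he2, hu] at h2
        norm_num [dotProduct, Fin.sum_univ_four, Matrix.cons_val_three, Matrix.cons_val_two] at h2
        have h5 : ((2*c+1 : ℤ) : ℝ) = 0 := by push_cast; linarith
        have h6 : (2*c+1 : ℤ) = 0 := by exact_mod_cast h5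
        omega
    have hdot := hOz ![(1:ℝ),0,0,0] ![(0:ℝ),1,0,0]
    rcases hucases with hu' | hu' | hu' | hu' <;> rcases hvcases with hv' | hv' | hv' | hv'
    · exfalso; rw [hu', hv'] at hdot; norm_num [dotProduct, Fin.sum_univ_four, Matrix.cons_val_three, Matrix.cons_val_two] at hdot
    · exfalso; rw [hu', hv'] at hdot; norm_num [dotProduct, Fin.sum_univ_four, Matrix.cons_val_three, Matrix.cons_val_two] at hdot
    · refine ⟨DihedralGroup.r 0, inj2 _ _ ?_⟩
      apply matEq4
      · rw [hF1, hu']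
      · rw [hF1, hv']
      · rw [hF1, he2]
      · rw [hF1, he3]
    · refine ⟨DihedralGroup.sr 0, inj2 _ _ ?_⟩
      apply matEq4
      · rw [hFB, hu']; funext j; rcases hfin j with rfl|rfl|rfl|rfl <;> norm_num [Matrix.cons_val_three, Matrix.cons_val_two]
      · rw [hFB, hv']; funext j; rcases hfin j with rfl|rfl|rfl|rfl <;> norm_num [Matrix.cons_val_three, Matrix.cons_val_two]
      · rw [hFB, he2]; funext j; rcases hfin j with rfl|rfl|rfl|rfl <;> norm_num [Matrix.cons_val_three, Matrix.cons_val_two]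
      · rw [hFB, he3]; funext j; rcases hfin j with rfl|rfl|rfl|rfl <;> norm_num [Matrix.cons_val_three, Matrix.cons_val_two]
    · exfalso; rw [hu', hv'] at hdot; norm_num [dotProduct, Fin.sum_univ_four, Matrix.cons_val_three, Matrix.cons_val_two] at hdot
    · exfalso; rw [hu', hv'] at hdot; norm_num [dotProduct, Fin.sum_univ_four, Matrix.cons_val_three, Matrix.cons_val_two] at hdot
    · refine ⟨DihedralGroup.sr 2, inj2 _ _ ?_⟩
      apply matEq4
      · rw [hFBA2, hu']; funext j; rcases hfin j with rfl|rfl|rfl|rfl <;> norm_num [Matrix.cons_val_three, Matrix.cons_val_two]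
      · rw [hFBA2, hv']; funext j; rcases hfin j with rfl|rfl|rfl|rfl <;> norm_num [Matrix.cons_val_three, Matrix.cons_val_two]
      · rw [hFBA2, he2]; funext j; rcases hfin j with rfl|rfl|rfl|rfl <;> norm_num [Matrix.cons_val_three, Matrix.cons_val_two]
      · rw [hFBA2, he3]; funext j; rcases hfin j with rfl|rfl|rfl|rfl <;> norm_num [Matrix.cons_val_three, Matrix.cons_val_two]
    · refine ⟨DihedralGroup.r 2, inj2 _ _ ?_⟩
      apply matEq4
      · rw [hFA2, hu']; funext j; rcases hfin j with rfl|rfl|rfl|rfl <;> norm_num [Matrix.cons_val_three, Matrix.cons_val_two]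
      · rw [hFA2, hv']; funext j; rcases hfin j with rfl|rfl|rfl|rfl <;> norm_num [Matrix.cons_val_three, Matrix.cons_val_two]
      · rw [hFA2, he2]; funext j; rcases hfin j with rfl|rfl|rfl|rfl <;> norm_num [Matrix.cons_val_three, Matrix.cons_val_two]
      · rw [hFA2, he3]; funext j; rcases hfin j with rfl|rfl|rfl|rfl <;> norm_num [Matrix.cons_val_three, Matrix.cons_val_two]
    · refine ⟨DihedralGroup.sr 3, inj2 _ _ ?_⟩
      apply matEq4
      · rw [hFBA3, hu']; funext j; rcases hfin j with rfl|rfl|rfl|rfl <;> norm_num [Matrix.cons_val_three, Matrix.cons_val_two]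
      · rw [hFBA3, hv']; funext j; rcases hfin j with rfl|rfl|rfl|rfl <;> norm_num [Matrix.cons_val_three, Matrix.cons_val_two]
      · rw [hFBA3, he2]; funext j; rcases hfin j with rfl|rfl|rfl|rfl <;> norm_num [Matrix.cons_val_three, Matrix.cons_val_two]
      · rw [hFBA3, he3]; funext j; rcases hfin j with rfl|rfl|rfl|rfl <;> norm_num [Matrix.cons_val_three, Matrix.cons_val_two]
    · refine ⟨DihedralGroup.r 1, inj2 _ _ ?_⟩
      apply matEq4
      · rw [hFA, hu']; funext j; rcases hfin j with rfl|rfl|rfl|rfl <;> norm_num [Matrix.cons_val_three, Matrix.cons_val_two]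
      · rw [hFA, hv']; funext j; rcases hfin j with rfl|rfl|rfl|rfl <;> norm_num [Matrix.cons_val_three, Matrix.cons_val_two]
      · rw [hFA, he2]; funext j; rcases hfin j with rfl|rfl|rfl|rfl <;> norm_num [Matrix.cons_val_three, Matrix.cons_val_two]
      · rw [hFA, he3]; funext j; rcases hfin j with rfl|rfl|rfl|rfl <;> norm_num [Matrix.cons_val_three, Matrix.cons_val_two]
    · exfalso; rw [hu', hv'] at hdot; norm_num [dotProduct, Fin.sum_univ_four, Matrix.cons_val_three, Matrix.cons_val_two] at hdot
    · exfalso; rw [hu', hv'] at hdot; norm_num [dotProduct, Fin.sum_univ_four, Matrix.cons_val_three, Matrix.cons_val_two] at hdot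
    · refine ⟨DihedralGroup.r 3, inj2 _ _ ?_⟩
      apply matEq4
      · rw [hFA3, hu']; funext j; rcases hfin j with rfl|rfl|rfl|rfl <;> norm_num [Matrix.cons_val_three, Matrix.cons_val_two]
      · rw [hFA3, hv']; funext j; rcases hfin j with rfl|rfl|rfl|rfl <;> norm_num [Matrix.cons_val_three, Matrix.cons_val_two]
      · rw [hFA3, he2]; funext j; rcases hfin j with rfl|rfl|rfl|rfl <;> norm_num [Matrix.cons_val_three, Matrix.cons_val_two]
      · rw [hFA3, he3]; funext j; rcases hfin j with rfl|rfl|rfl|rfl <;> norm_num [Matrix.cons_val_three, Matrix.cons_val_two]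
    · refine ⟨DihedralGroup.sr 1, inj2 _ _ ?_⟩
      apply matEq4
      · rw [hFBA, hu']; funext j; rcases hfin j with rfl|rfl|rfl|rfl <;> norm_num [Matrix.cons_val_three, Matrix.cons_val_two]
      · rw [hFBA, hv']; funext j; rcases hfin j with rfl|rfl|rfl|rfl <;> norm_num [Matrix.cons_val_three, Matrix.cons_val_two]
      · rw [hFBA, he2]; funext j; rcases hfin j with rfl|rfl|rfl|rfl <;> norm_num [Matrix.cons_val_three, Matrix.cons_val_two]
      · rw [hFBA, he3]; funext j; rcases hfin j with rfl|rfl|rfl|rfl <;> norm_num [Matrix.cons_val_three, Matrix.cons_val_two]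
    · exfalso; rw [hu', hv'] at hdot; norm_num [dotProduct, Fin.sum_univ_four, Matrix.cons_val_three, Matrix.cons_val_two] at hdot
    · exfalso; rw [hu', hv'] at hdot; norm_num [dotProduct, Fin.sum_univ_four, Matrix.cons_val_three, Matrix.cons_val_two] at hdot
  -- conclusion
  let E : DihedralGroup 4 ≃* ↥𝒲 := MulEquiv.ofBijective F ⟨hFinj, hFsurj⟩
  refine ⟨𝒲, fun w => Iff.rfl, ?_, ⟨E.symm⟩⟩
  have hcard := Nat.card_congr E.toEquiv
  rw [DihedralGroup.nat_card] at hcard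
  omega
end
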